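/- arXiv:2109.07160 — 14 statements merged into one kernel-verified Lean document; each statement's English description precedes it below -/
import Mathlib

section
/- Let X be a compact metric space with a countable dense subset D = {x_1, x_2, ...}. For each i, define f_i : X → [0,1] by f_i(x) = 1/(1 + d(x_i, x)), and for A ⊆ X nonempty set τ_i(A) = diam(f_i(A)) and τ(A) = ∑_{i=1}^∞ 2^{-i} τ_i(A). Then τ is a size function on the hyperspace of nonempty closed subsets of X: (1) if A ⊊ B are nonempty closed sets then τ(A) < τ(B); (2) τ({x}) = 0 for every x ∈ X; (3) τ is continuous with respect to the Hausdorff metric. -/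
open TopologicalSpace Metric

section aux

variable {X : Type*} [MetricSpace X]

/-- The basic function `f y x = 1/(1+dist y x)` is 1-Lipschitz-like. -/
lemma fdist_le (y a b : X) :
    dist (1 / (1 + dist y a)) (1 / (1 + dist y b)) ≤ dist a b := by
  have ha : (0:ℝ) < 1 + dist y a := by positivity
  have hb : (0:ℝ) < 1 + dist y b := by positivity
  have h1 : 1 / (1 + dist y a) - 1 / (1 + dist y b)
      = (dist y b - dist y a) / ((1 + dist y a) * (1 + dist y b)) := by
    field_simp
    ring
  rw [Real.dist_eq, h1, abs_div]
  have h2 : |dist y b - dist y a| ≤ dist a b := by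
    rw [dist_comm y b, dist_comm y a, dist_comm a b]
    exact abs_dist_sub_le b a y
  have h3 : (1:ℝ) ≤ |(1 + dist y a) * (1 + dist y b)| := by
    rw [abs_of_pos (by positivity)]
    nlinarith [dist_nonneg (x := y) (y := a), dist_nonneg (x := y) (y := b)]
  calc |dist y b - dist y a| / |(1 + dist y a) * (1 + dist y b)|
      ≤ |dist y b - dist y a| / 1 :=
        div_le_div_of_nonneg_left (abs_nonneg _) one_pos h3 |>.trans (le_refl _)
    _ = |dist y b - dist y a| := by ring
    _ ≤ dist a b := h2

lemma fmem (y x : X) : 1 / (1 + dist y x) ∈ Set.Icc (0:ℝ) 1 := by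
  constructor
  · positivity
  · rw [div_le_one (by positivity)]
    nlinarith [dist_nonneg (x := y) (y := x)]

lemma fimg_sub (y : X) (A : Set X) :
    (fun x => 1 / (1 + dist y x)) '' A ⊆ Set.Icc (0:ℝ) 1 := by
  rintro - ⟨x, -, rfl⟩; exact fmem y x

lemma fimg_bounded (y : X) (A : Set X) :
    Bornology.IsBounded ((fun x => 1 / (1 + dist y x)) '' A) :=
  (isBounded_Icc (0:ℝ) 1).subset (fimg_sub y A)

lemma fimg_diam_le_one (y : X) (A : Set X) :
    diam ((fun x => 1 / (1 + dist y x)) '' A) ≤ 1 := by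
  refine diam_le_of_forall_dist_le zero_le_one ?_
  intro p hp q hq
  obtain ⟨a, -, rfl⟩ := hp
  obtain ⟨b, -, rfl⟩ := hq
  have h1 := fmem y a
  have h2 := fmem y b
  rw [Real.dist_eq, abs_le]
  constructor <;> · simp only [Set.mem_Icc] at h1 h2; linarith [h1.1, h1.2, h2.1, h2.2]

/-- Key continuity estimate. -/
lemma diam_image_le (y : X) (K L : NonemptyCompacts X) :
    diam ((fun x => 1 / (1 + dist y x)) '' (K : Set X)) ≤
      diam ((fun x => 1 / (1 + dist y x)) '' (L : Set X)) + 2 * dist K L := by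
  set f : X → ℝ := fun x => 1 / (1 + dist y x) with hf
  have hfin : EMetric.hausdorffEdist (K : Set X) (L : Set X) ≠ ⊤ :=
    hausdorffEdist_ne_top_of_nonempty_of_bounded K.nonempty L.nonempty
      K.isCompact.isBounded L.isCompact.isBounded
  refine diam_le_of_forall_dist_le (by positivity) ?_
  rintro - ⟨a, ha, rfl⟩ - ⟨b, hb, rfl⟩
  obtain ⟨a', ha', hda⟩ := L.isCompact.exists_infDist_eq_dist L.nonempty a
  obtain ⟨b', hb', hdb⟩ := L.isCompact.exists_infDist_eq_dist L.nonempty b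
  have hda' : dist a a' ≤ dist K L := by
    rw [← hda, NonemptyCompacts.dist_eq]
    exact infDist_le_hausdorffDist_of_mem ha hfin
  have hdb' : dist b b' ≤ dist K L := by
    rw [← hdb, NonemptyCompacts.dist_eq]
    exact infDist_le_hausdorffDist_of_mem hb hfin
  calc dist (f a) (f b)
      ≤ dist (f a) (f a') + dist (f a') (f b') + dist (f b') (f b) := dist_triangle4 _ _ _ _
    _ ≤ dist a a' + diam (f '' (L : Set X)) + dist b' b := by
        gcongr
        · exact fdist_le y a a'
        · exact dist_le_diam_of_mem (fimg_bounded y L)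
            (Set.mem_image_of_mem f ha') (Set.mem_image_of_mem f hb')
        · exact fdist_le y b' b
    _ ≤ dist K L + diam (f '' (L : Set X)) + dist K L := by
        rw [dist_comm b' b]; gcongr
    _ = diam (f '' (L : Set X)) + 2 * dist K L := by ring

lemma cont_diam_image (y : X) :
    Continuous (fun K : NonemptyCompacts X =>
      diam ((fun x => 1 / (1 + dist y x)) '' (K : Set X))) := by
  refine (LipschitzWith.of_dist_le_mul (K := 2) ?_).continuous
  intro K L
  rw [Real.dist_eq, abs_le]
  push_cast
  constructor
  · have := diam_image_le y L K
    rw [dist_comm K L] at *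
    linarith
  · have := diam_image_le y K L
    linarith

end aux

/-- the explicit construction of a size (Whitney) function on the
hyperspace of nonempty closed (= compact) subsets of a compact metric space. -/
theorem stmt0 {X : Type*} [MetricSpace X] [CompactSpace X]
    (D : ℕ → X) (hD : DenseRange D)
    (τ : Set X → ℝ)
    (hτ : ∀ A : Set X,
      τ A = ∑' i : ℕ, (1 / 2 : ℝ) ^ (i + 1) *
        Metric.diam ((fun x => 1 / (1 + dist (D i) x)) '' A)) :
    (∀ A B : Set X, A.Nonempty → IsClosed A → IsClosed B → A ⊂ B → τ A < τ B) ∧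
    (∀ x : X, τ {x} = 0) ∧
    Continuous (fun K : NonemptyCompacts X => τ (K : Set X)) := by
  have hsum : Summable (fun i : ℕ => (1 / 2 : ℝ) ^ (i + 1)) := by
    simp_rw [pow_succ]
    exact (summable_geometric_of_lt_one (by norm_num) (by norm_num)).mul_right _
  refine ⟨?_, ?_, ?_⟩
  · -- strict monotonicity
    intro A B hA hAc hBc hAB
    rw [hτ A, hτ B]
    obtain ⟨b, hbB, hbA⟩ := Set.exists_of_ssubset hAB
    -- find ε with closed ball around b disjoint from A
    have : ∃ ε > (0:ℝ), ∀ a ∈ A, ε ≤ dist b a := by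
      have h := hAc.isOpen_compl.mem_nhds (by simpa using hbA)
      rcases Metric.mem_nhds_iff.1 h with ⟨ε, hε, hball⟩
      refine ⟨ε, hε, fun a ha => ?_⟩
      by_contra hlt
      push_neg at hlt
      exact (hball (show a ∈ Metric.ball b ε by simpa [Metric.mem_ball, dist_comm] using hlt)) ha
    obtain ⟨ε, hε, hεA⟩ := this
    -- pick i with D i close to b
    obtain ⟨i, hi⟩ := Metric.denseRange_iff.1 hD b (ε / 3) (by linarith)
    set f : X → ℝ := fun x => 1 / (1 + dist (D i) x) with hfdef
    set c : ℝ := 1 / (1 + 2 * ε / 3) with hcdef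
    have hfa : ∀ a ∈ A, f a ≤ c := by
      intro a ha
      have h1 : 2 * ε / 3 ≤ dist (D i) a := by
        have := abs_dist_sub_le b a (D i)
        have h2 := hεA a ha
        have h3 : dist b (D i) < ε / 3 := hi
        have := dist_triangle b (D i) a
        linarith
      apply div_le_div_of_nonneg_left one_pos.le (by positivity)
      linarith
    have hfb : c < f b := by
      rw [hfdef, hcdef]
      apply div_lt_div_of_pos_left one_pos (by positivity)
      have : dist (D i) b < ε / 3 := by rw [dist_comm]; exact hi
      linarith
    -- strict inequality of diameters at index i
    have hkey : diam (f '' A) < diam (f '' B) := by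
      set S := f '' A with hS
      have hSne : S.Nonempty := hA.image f
      have hSbdd : BddBelow S := ⟨0, fun p hp => (fimg_sub (D i) A hp).1⟩
      set m := sInf S with hm
      have hcm : sInf S ≤ c := by
        obtain ⟨a, ha⟩ := hA
        exact le_trans (csInf_le hSbdd (Set.mem_image_of_mem f ha)) (hfa a ha)
      have hdiamS : diam S ≤ c - m := by
        obtain ⟨a0, ha0⟩ := hA
        have hnn : (0:ℝ) ≤ c - m := by
          have h1 : m ≤ f a0 := csInf_le hSbdd (Set.mem_image_of_mem f ha0)
          have h2 := hfa a0 ha0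
          linarith
        refine diam_le_of_forall_dist_le hnn ?_
        rintro - ⟨a, ha, rfl⟩ - ⟨a', ha', rfl⟩
        rw [Real.dist_eq, abs_le]
        have h1 : m ≤ f a := csInf_le hSbdd (Set.mem_image_of_mem f ha)
        have h2 : m ≤ f a' := csInf_le hSbdd (Set.mem_image_of_mem f ha')
        exact ⟨by linarith [hfa a ha, hfa a' ha'], by linarith [hfa a ha, hfa a' ha']⟩
      -- pick y ∈ S close to the infimum
      obtain ⟨y, hyS, hy⟩ := exists_lt_of_csInf_lt hSne (show m < m + (f b - c) by linarith)
      have hyB : y ∈ f '' B := by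
        obtain ⟨a, ha, rfl⟩ := hyS
        exact Set.mem_image_of_mem f (hAB.1 ha)
      have hmy : m ≤ y := csInf_le hSbdd hyS
      calc diam S ≤ c - m := hdiamS
        _ < f b - y := by linarith
        _ ≤ dist (f b) y := le_abs_self _
        _ ≤ diam (f '' B) := dist_le_diam_of_mem (fimg_bounded (D i) B)
            (Set.mem_image_of_mem f hbB) hyB
    refine Summable.tsum_lt_tsum_of_nonneg (i := i) ?_ ?_ ?_ ?_
    · intro n; positivity
    · intro n
      have : diam ((fun x => 1 / (1 + dist (D n) x)) '' A)
          ≤ diam ((fun x => 1 / (1 + dist (D n) x)) '' B) :=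
        diam_mono (Set.image_mono hAB.1) (fimg_bounded (D n) B)
      gcongr
    · have h2 : (0:ℝ) < (1/2:ℝ) ^ (i+1) := by positivity
      exact (mul_lt_mul_iff_right₀ h2).2 hkey
    · refine Summable.of_nonneg_of_le (fun n => by positivity) (fun n => ?_) hsum
      calc (1 / 2 : ℝ) ^ (n + 1) * diam ((fun x => 1 / (1 + dist (D n) x)) '' B)
          ≤ (1 / 2 : ℝ) ^ (n + 1) * 1 := by
            gcongr
            exact fimg_diam_le_one _ _
        _ = (1 / 2 : ℝ) ^ (n + 1) := mul_one _
  · -- singletons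
    intro x
    rw [hτ]
    simp [Set.image_singleton, Metric.diam_singleton]
  · -- continuity
    simp only [hτ]
    refine continuous_tsum (f := fun n (K : NonemptyCompacts X) =>
      (1 / 2 : ℝ) ^ (n + 1) * diam ((fun x => 1 / (1 + dist (D n) x)) '' (K : Set X)))
      (u := fun n => (1 / 2 : ℝ) ^ (n + 1)) ?_ hsum ?_
    · intro n
      exact continuous_const.mul (cont_diam_image (D n))
    · intro n K
      rw [Real.norm_eq_abs, abs_of_nonneg (by positivity)]
      calc (1 / 2 : ℝ) ^ (n + 1) * diam ((fun x => 1 / (1 + dist (D n) x)) '' (K : Set X))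
          ≤ (1 / 2 : ℝ) ^ (n + 1) * 1 := by gcongr; exact fimg_diam_le_one _ _
        _ = (1 / 2 : ℝ) ^ (n + 1) := mul_one _
end

section
/- Let X be a compact metric space, D = {x_1, x_2, ...} a countable dense subset, f_i(x) = 1/(1+d(x_i,x)), τ_i(A) = diam(f_i(A)), and τ(A) = ∑ 2^{-i} τ_i(A). If C, C_1, C_2, ... are nonempty compact connected subsets of X with C ⊆ ⋃_{k=1}^∞ C_k, then τ(C) ≤ ∑_{k=1}^∞ τ(C_k). -/
open Metric MeasureTheory

lemma ediam_eq_volume_of_compact_connected {s : Set ℝ} (hne : s.Nonempty)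
    (hc : IsCompact s) (hconn : IsConnected s) :
    EMetric.diam s = volume s := by
  have hbd : Bornology.IsBounded s := hc.isBounded
  have hs : s = Set.Icc (sInf s) (sSup s) := by
    apply Set.Subset.antisymm
    · intro x hx
      exact ⟨csInf_le hbd.bddBelow hx, le_csSup hbd.bddAbove hx⟩
    · exact (hconn.isPreconnected.ordConnected).out (hc.sInf_mem hne) (hc.sSup_mem hne)
  rw [hs]; show ediam _ = _; rw [Real.ediam_Icc, Real.volume_Icc]

/-- the specific size function τ is countably subadditive on
subcontinua: if a subcontinuum C is covered by countably many subcontinua C_k,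
then τ(C) ≤ ∑ₖ τ(C_k). -/
theorem stmt1 {X : Type*} [MetricSpace X] [CompactSpace X]
    (D : ℕ → X) (hD : DenseRange D)
    (τ : Set X → ℝ)
    (hτ : ∀ A : Set X,
      τ A = ∑' i : ℕ, (1 / 2 : ℝ) ^ (i + 1) *
        Metric.diam ((fun x => 1 / (1 + dist (D i) x)) '' A))
    (C : Set X) (Ck : ℕ → Set X)
    (hC : C.Nonempty ∧ IsCompact C ∧ IsConnected C)
    (hCk : ∀ k, (Ck k).Nonempty ∧ IsCompact (Ck k) ∧ IsConnected (Ck k))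
    (hcover : C ⊆ ⋃ k, Ck k) :
    ENNReal.ofReal (τ C) ≤ ∑' k, ENNReal.ofReal (τ (Ck k)) := by
  set f : ℕ → X → ℝ := fun i x => 1 / (1 + dist (D i) x) with hf
  have hfc : ∀ i, Continuous (f i) := by
    intro i
    apply Continuous.div continuous_const
    · exact continuous_const.add (continuous_const.dist continuous_id)
    · intro x
      positivity
  -- bound on each diam
  have hdiam_le : ∀ i (A : Set X), Metric.diam (f i '' A) ≤ 1 := by
    intro i A
    apply Metric.diam_le_of_forall_dist_le zero_le_one
    rintro x ⟨a, -, rfl⟩ y ⟨b, -, rfl⟩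
    have h1 : f i a ∈ Set.Ioc (0:ℝ) 1 := by
      constructor
      · positivity
      · rw [div_le_one (by positivity)]; linarith [dist_nonneg (x := D i) (y := a)]
    have h2 : f i b ∈ Set.Ioc (0:ℝ) 1 := by
      constructor
      · positivity
      · rw [div_le_one (by positivity)]; linarith [dist_nonneg (x := D i) (y := b)]
    rw [Real.dist_eq]
    rw [abs_le]
    constructor <;> [linarith [h1.1, h1.2, h2.1, h2.2]; linarith [h1.1, h1.2, h2.1, h2.2]]
  have hsummable : ∀ A : Set X,
      Summable fun i : ℕ => (1 / 2 : ℝ) ^ (i + 1) * Metric.diam (f i '' A) := by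
    intro A
    apply Summable.of_nonneg_of_le (fun i => by positivity)
      (fun i => ?_) (summable_geometric_two.mul_right 1 |>.comp_injective (add_left_injective 1))
    · calc (1 / 2 : ℝ) ^ (i + 1) * Metric.diam (f i '' A)
          ≤ (1/2:ℝ) ^ (i+1) * 1 := by
            exact mul_le_mul_of_nonneg_left (hdiam_le i A) (by positivity)
      _ = ((fun n => (1/2:ℝ)^n * 1) ∘ (fun i => i + 1)) i := rfl
  -- rewrite τ in ENNReal
  have hofReal : ∀ (A : Set X), IsCompact A →
      ENNReal.ofReal (τ A)
        = ∑' i : ℕ, ENNReal.ofReal ((1/2:ℝ)^(i+1)) * EMetric.diam (f i '' A) := by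
    intro A hA
    rw [hτ A, ENNReal.ofReal_tsum_of_nonneg (fun i => by positivity) (hsummable A)]
    congr 1
    ext i
    rw [ENNReal.ofReal_mul (by positivity)]
    congr 1
    have hbd : Bornology.IsBounded (f i '' A) := (hA.image (hfc i)).isBounded
    rw [Metric.diam, ENNReal.ofReal_toReal hbd.ediam_ne_top]; rfl
  obtain ⟨hCne, hCcomp, hCconn⟩ := hC
  rw [hofReal C hCcomp]
  have hstep : ∀ k, ENNReal.ofReal (τ (Ck k))
      = ∑' i : ℕ, ENNReal.ofReal ((1/2:ℝ)^(i+1)) * EMetric.diam (f i '' Ck k) :=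
    fun k => hofReal (Ck k) (hCk k).2.1
  calc ∑' i : ℕ, ENNReal.ofReal ((1/2:ℝ)^(i+1)) * EMetric.diam (f i '' C)
      ≤ ∑' i : ℕ, ENNReal.ofReal ((1/2:ℝ)^(i+1)) *
          ∑' k : ℕ, EMetric.diam (f i '' Ck k) := by
        apply ENNReal.tsum_le_tsum
        intro i
        apply mul_le_mul_right
        -- key inequality
        have h1 : EMetric.diam (f i '' C) = volume (f i '' C) :=
          ediam_eq_volume_of_compact_connected (hCne.image _)
            (hCcomp.image (hfc i)) (hCconn.image _ ((hfc i).continuousOn))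
        have hsub : f i '' C ⊆ ⋃ k, f i '' Ck k := by
          rw [← Set.image_iUnion]
          exact Set.image_mono hcover
        calc EMetric.diam (f i '' C) = volume (f i '' C) := h1
          _ ≤ volume (⋃ k, f i '' Ck k) := measure_mono hsub
          _ ≤ ∑' k, volume (f i '' Ck k) := measure_iUnion_le _
          _ ≤ ∑' k, EMetric.diam (f i '' Ck k) :=
              ENNReal.tsum_le_tsum fun k => Real.volume_le_diam _
    _ = ∑' i : ℕ, ∑' k : ℕ, ENNReal.ofReal ((1/2:ℝ)^(i+1)) *
          EMetric.diam (f i '' Ck k) := by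
        congr 1; ext i; rw [ENNReal.tsum_mul_left]
    _ = ∑' k : ℕ, ∑' i : ℕ, ENNReal.ofReal ((1/2:ℝ)^(i+1)) *
          EMetric.diam (f i '' Ck k) := ENNReal.tsum_comm
    _ = ∑' k, ENNReal.ofReal (τ (Ck k)) := by
        congr 1; ext k; exact (hstep k).symm
end

section
/- Let f : X → [0,1] be continuous and C, C_1, C_2, ... be nonempty connected subsets of X with C ⊆ ⋃_{k=1}^∞ C_k. Then diam(f(C)) ≤ ∑_{k=1}^∞ diam(f(C_k)). -/
open MeasureTheory

lemma diam_le_volume_of_preconnected {s : Set ℝ} (hs : IsPreconnected s) :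
    EMetric.diam s ≤ volume s := by
  apply EMetric.diam_le
  intro x hx y hy
  rcases le_total x y with h | h
  · have hIcc : Set.Icc x y ⊆ s := hs.ordConnected.out hx hy
    calc edist x y = ENNReal.ofReal (y - x) := by
          rw [edist_dist, Real.dist_eq, abs_sub_comm, abs_of_nonneg (by linarith)]
      _ = volume (Set.Icc x y) := (Real.volume_Icc).symm
      _ ≤ volume s := measure_mono hIcc
  · have hIcc : Set.Icc y x ⊆ s := hs.ordConnected.out hy hx
    calc edist x y = ENNReal.ofReal (x - y) := by
          rw [edist_dist, Real.dist_eq, abs_of_nonneg (by linarith)]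
      _ = volume (Set.Icc y x) := (Real.volume_Icc).symm
      _ ≤ volume s := measure_mono hIcc

/-- for a continuous f : X → [0,1] and connected sets C ⊆ ⋃ₖ C_k,
diam(f(C)) ≤ ∑ₖ diam(f(C_k)). -/
theorem stmt2 {X : Type*} [TopologicalSpace X]
    (f : X → ℝ) (hf : Continuous f) (hf01 : ∀ x, f x ∈ Set.Icc (0 : ℝ) 1)
    (C : Set X) (Ck : ℕ → Set X)
    (hC : C.Nonempty ∧ IsConnected C)
    (hCk : ∀ k, (Ck k).Nonempty ∧ IsConnected (Ck k))
    (hcover : C ⊆ ⋃ k, Ck k) :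
    ENNReal.ofReal (Metric.diam (f '' C)) ≤
      ∑' k, ENNReal.ofReal (Metric.diam (f '' Ck k)) := by
  have hconnC : IsPreconnected (f '' C) := (hC.2.image f hf.continuousOn).isPreconnected
  have hbdd : ∀ s : Set X, f '' s ⊆ Set.Icc (0 : ℝ) 1 := by
    rintro s _ ⟨x, -, rfl⟩; exact hf01 x
  -- left side ≤ EMetric.diam
  have h1 : ENNReal.ofReal (Metric.diam (f '' C)) ≤ EMetric.diam (f '' C) := by
    rw [Metric.diam]
    exact ENNReal.ofReal_toReal_le
  -- EMetric.diam ≤ volume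
  have h2 : EMetric.diam (f '' C) ≤ volume (f '' C) :=
    diam_le_volume_of_preconnected hconnC
  -- volume ≤ sum of volumes
  have hsub : f '' C ⊆ ⋃ k, f '' Ck k := by
    rintro _ ⟨x, hx, rfl⟩
    rcases Set.mem_iUnion.mp (hcover hx) with ⟨k, hk⟩
    exact Set.mem_iUnion.mpr ⟨k, Set.mem_image_of_mem f hk⟩
  have h3 : volume (f '' C) ≤ ∑' k, volume (f '' Ck k) :=
    (measure_mono hsub).trans (measure_iUnion_le _)
  -- each volume ≤ diam, and diam finite
  have h4 : ∀ k, volume (f '' Ck k) ≤ ENNReal.ofReal (Metric.diam (f '' Ck k)) := by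
    intro k
    have hb : Bornology.IsBounded (f '' Ck k) :=
      Metric.isBounded_Icc (0 : ℝ) 1 |>.subset (hbdd _)
    calc volume (f '' Ck k) ≤ EMetric.diam (f '' Ck k) := Real.volume_le_diam _
      _ = ENNReal.ofReal (Metric.diam (f '' Ck k)) := by
          rw [Metric.diam, ENNReal.ofReal_toReal hb.ediam_ne_top]; rfl
  calc ENNReal.ofReal (Metric.diam (f '' C)) ≤ volume (f '' C) := h1.trans h2
    _ ≤ ∑' k, volume (f '' Ck k) := h3
    _ ≤ ∑' k, ENNReal.ofReal (Metric.diam (f '' Ck k)) := ENNReal.tsum_le_tsum h4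
end

section
/- Let X be a continuum (nonempty compact connected metric space) that admits an atomless Borel probability measure μ such that for every sequence (Y_n) of subcontinua with μ(Y_n) → 0 one has diam(Y_n) → 0. Then X has at most countably many pairwise disjoint nondegenerate subcontinua; i.e., X is Suslinian. -/
open MeasureTheory Filter

/-- a continuum that is 1-dimensional in the sense of measure is
Suslinian: any family of pairwise disjoint nondegenerate subcontinua is countable. -/
theorem stmt5 {X : Type*} [MetricSpace X] [CompactSpace X] [ConnectedSpace X]
    [Nonempty X] [MeasurableSpace X] [BorelSpace X]
    (μ : Measure X) [IsProbabilityMeasure μ]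
    (hatomless : ∀ x : X, μ {x} = 0)
    (hμ : ∀ Y : ℕ → Set X,
      (∀ n, (Y n).Nonempty ∧ IsCompact (Y n) ∧ IsConnected (Y n)) →
      Tendsto (fun n => μ (Y n)) atTop (nhds 0) →
      Tendsto (fun n => Metric.diam (Y n)) atTop (nhds 0))
    (S : Set (Set X))
    (hS : ∀ A ∈ S, A.Nonempty ∧ IsCompact A ∧ IsConnected A ∧ A.Nontrivial)
    (hdisj : S.Pairwise Disjoint) :
    S.Countable := by
  have hpos : ∀ A ∈ S, 0 < μ A := by
    intro A hA
    obtain ⟨hne, hcomp, hconn, hnt⟩ := hS A hA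
    by_contra h
    push_neg at h
    have hzero : μ A = 0 := le_antisymm h zero_le
    have htend := hμ (fun _ => A) (fun _ => ⟨hne, hcomp, hconn⟩) (by simp [hzero])
    have hd : Metric.diam A = 0 := tendsto_nhds_unique tendsto_const_nhds htend
    obtain ⟨x, hx, y, hy, hxy⟩ := hnt
    have hle : dist x y ≤ 0 := hd ▸ Metric.dist_le_diam_of_mem hcomp.isBounded hx hy
    exact hxy (dist_le_zero.mp hle)
  have hcnt : {A : S | 0 < μ (A : Set X)}.Countable :=
    MeasureTheory.Measure.countable_meas_pos_of_disjoint_iUnion₀ (μ := μ)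
      (As := fun A : S => (A : Set X))
      (fun A => ((hS A A.2).2.1.isClosed.measurableSet).nullMeasurableSet)
      (fun A B hAB => (hdisj A.2 B.2 (Subtype.coe_ne_coe.mpr hAB)).aedisjoint)
  rw [← Set.countable_coe_iff]
  exact Set.countable_univ_iff.mp (hcnt.mono (fun A _ => hpos A A.2))
end

section
/- Let X be a continuum admitting an atomless Borel probability measure μ such that for every sequence (Y_n) of subcontinua with μ(Y_n) → 0 one has diam(Y_n) → 0. Define ρ(x,y) = inf { μ(K) : K a subcontinuum of X containing x and y } (with inf ∅ = ∞, but assume X is such that any two points lie in some subcontinuum, e.g. X itself). Then ρ is a metric on X. -/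
open MeasureTheory Filter

/-- on a continuum 1-dimensional in the sense of measure, the
function ρ(x,y) = inf { μ(K) : K a subcontinuum containing x and y } is a metric. -/
theorem stmt6 {X : Type*} [MetricSpace X] [CompactSpace X] [ConnectedSpace X]
    [Nonempty X] [MeasurableSpace X] [BorelSpace X]
    (μ : Measure X) [IsProbabilityMeasure μ]
    (hatomless : ∀ x : X, μ {x} = 0)
    (hμ : ∀ Y : ℕ → Set X,
      (∀ n, (Y n).Nonempty ∧ IsCompact (Y n) ∧ IsConnected (Y n)) →
      Tendsto (fun n => μ (Y n)) atTop (nhds 0) →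
      Tendsto (fun n => Metric.diam (Y n)) atTop (nhds 0))
    (ρ : X → X → ℝ)
    (hρ : ∀ x y : X, ρ x y =
      sInf {r : ℝ | ∃ K : Set X, IsCompact K ∧ IsConnected K ∧ x ∈ K ∧ y ∈ K ∧
        (μ K).toReal = r}) :
    (∀ x y : X, ρ x y = 0 ↔ x = y) ∧
    (∀ x y : X, ρ x y = ρ y x) ∧
    (∀ x y z : X, ρ x z ≤ ρ x y + ρ y z) := by
  set S : X → X → Set ℝ := fun x y =>
    {r : ℝ | ∃ K : Set X, IsCompact K ∧ IsConnected K ∧ x ∈ K ∧ y ∈ K ∧ (μ K).toReal = r}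
    with hSdef
  have hSne : ∀ x y : X, (S x y).Nonempty := fun x y =>
    ⟨(μ Set.univ).toReal, Set.univ, isCompact_univ,
      ⟨Set.univ_nonempty, isPreconnected_univ⟩, trivial, trivial, rfl⟩
  have hbdd : ∀ x y : X, BddBelow (S x y) := by
    intro x y
    refine ⟨0, fun r hr => ?_⟩
    obtain ⟨K, _, _, _, _, hK⟩ := hr
    simp [← hK]
  have hnonneg : ∀ x y : X, 0 ≤ ρ x y := by
    intro x y
    rw [hρ]
    refine le_csInf (hSne x y) fun r hr => ?_
    obtain ⟨K, _, _, _, _, hK⟩ := hr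
    simp [← hK]
  refine ⟨?_, ?_, ?_⟩
  · intro x y
    constructor
    · intro h
      -- choose a sequence of continua with small measure
      have hx : ∀ n : ℕ, ∃ r ∈ S x y, r < 1 / (n + 1 : ℝ) := by
        intro n
        have h0 : sInf (S x y) < 1 / (n + 1 : ℝ) := by
          rw [← hρ, h]
          positivity
        exact exists_lt_of_csInf_lt (hSne x y) h0
      choose r hr hrlt using hx
      have hK : ∀ n : ℕ, ∃ K : Set X, IsCompact K ∧ IsConnected K ∧ x ∈ K ∧ y ∈ K ∧
          (μ K).toReal = r n := fun n => hr n
      choose K hKc hKconn hxK hyK hKr using hK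
      have hμK : Tendsto (fun n => μ (K n)) atTop (nhds 0) := by
        have hle : ∀ n, μ (K n) ≤ ENNReal.ofReal (1 / (n + 1 : ℝ)) := by
          intro n
          have hfin : μ (K n) ≠ ⊤ := measure_ne_top μ _
          rw [← ENNReal.ofReal_toReal hfin]
          exact ENNReal.ofReal_le_ofReal (le_of_lt (hKr n ▸ hrlt n))
        have h2 : Tendsto (fun n : ℕ => ENNReal.ofReal (1 / (n + 1 : ℝ))) atTop (nhds 0) := by
          rw [show (0 : ENNReal) = ENNReal.ofReal 0 by simp]
          exact ENNReal.tendsto_ofReal tendsto_one_div_add_atTop_nhds_zero_nat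
        exact tendsto_of_tendsto_of_tendsto_of_le_of_le tendsto_const_nhds h2
          (fun n => zero_le) hle
      have hdiam := hμ K (fun n => ⟨(hKconn n).1, hKc n, hKconn n⟩) hμK
      have hd : ∀ n, dist x y ≤ Metric.diam (K n) := fun n =>
        Metric.dist_le_diam_of_mem (hKc n).isBounded (hxK n) (hyK n)
      have : dist x y ≤ 0 := ge_of_tendsto' hdiam hd
      exact dist_le_zero.mp this
    · rintro rfl
      refine le_antisymm ?_ (hnonneg x x)
      rw [hρ]
      refine csInf_le (hbdd x x) ?_
      exact ⟨{x}, isCompact_singleton, isConnected_singleton, rfl, rfl,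
        by simp [hatomless x]⟩
  · intro x y
    rw [hρ, hρ]
    congr 1
    ext r
    constructor <;> rintro ⟨K, h1, h2, h3, h4, h5⟩ <;> exact ⟨K, h1, h2, h4, h3, h5⟩
  · intro x y z
    rw [hρ x z, hρ x y, hρ y z]
    refine le_of_forall_pos_le_add fun ε hε => ?_
    obtain ⟨r1, hr1, hr1lt⟩ := exists_lt_of_csInf_lt (hSne x y)
      (lt_add_of_pos_right _ (half_pos hε))
    obtain ⟨r2, hr2, hr2lt⟩ := exists_lt_of_csInf_lt (hSne y z)
      (lt_add_of_pos_right _ (half_pos hε))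
    obtain ⟨K1, hK1c, hK1conn, hxK1, hyK1, hK1r⟩ := hr1
    obtain ⟨K2, hK2c, hK2conn, hyK2, hzK2, hK2r⟩ := hr2
    have hconn : IsConnected (K1 ∪ K2) :=
      IsConnected.union ⟨y, hyK1, hyK2⟩ hK1conn hK2conn
    have hmem : (μ (K1 ∪ K2)).toReal ∈ S x z :=
      ⟨K1 ∪ K2, hK1c.union hK2c, hconn, Or.inl hxK1, Or.inr hzK2, rfl⟩
    have hle : (μ (K1 ∪ K2)).toReal ≤ r1 + r2 := by
      rw [← hK1r, ← hK2r]
      have := measure_union_le (μ := μ) K1 K2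
      have h1 : μ K1 ≠ ⊤ := measure_ne_top μ _
      have h2 : μ K2 ≠ ⊤ := measure_ne_top μ _
      calc (μ (K1 ∪ K2)).toReal ≤ (μ K1 + μ K2).toReal :=
            ENNReal.toReal_mono (ENNReal.add_ne_top.mpr ⟨h1, h2⟩) this
        _ = (μ K1).toReal + (μ K2).toReal := ENNReal.toReal_add h1 h2
    calc sInf (S x z) ≤ (μ (K1 ∪ K2)).toReal := csInf_le (hbdd x z) hmem
      _ ≤ r1 + r2 := hle
      _ ≤ (sInf (S x y) + ε / 2) + (sInf (S y z) + ε / 2) :=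
          add_le_add hr1lt.le hr2lt.le
      _ = sInf (S x y) + sInf (S y z) + ε := by ring
end

section
/- Let X be a continuum that is 1-dimensional in the sense of measure: there is an atomless Borel probability measure μ such that μ(Y_n) → 0 implies diam(Y_n) → 0 for any sequence of subcontinua (Y_n). Then X is locally connected (a Peano continuum). -/
/-!
Suppose `X` is not locally connected: some component `C` of an open set `U` is not a
neighbourhood of one of its points `z`. Take a closed ball `K ⊆ U` of radius `ε` around `z` and
points `qₙ → z` outside `C`. The components of `K` through the `qₙ` avoid `z`, so infinitely many
of them are distinct, hence pairwise disjoint; by boundary bumping each meets the sphere of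
radius `ε`, so has diameter at least `ε / 2`. Disjoint sets of a probability space have measures
tending to `0`, which contradicts the hypothesis on `μ`.
-/

open MeasureTheory Filter Set Metric Topology Function

section Topology

variable {X : Type*} [TopologicalSpace X]

lemma IsCompact.connectedComponentIn {K : Set X} (hK : IsCompact K) (x : X) :
    IsCompact (connectedComponentIn K x) := by
  by_cases hx : x ∈ K
  · have : CompactSpace K := isCompact_iff_compactSpace.mp hK
    rw [connectedComponentIn_eq_image hx]
    exact isClosed_connectedComponent.isCompact.image continuous_subtype_val
  · rw [connectedComponentIn_eq_empty hx]
    exact isCompact_empty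

lemma exists_isClopen_mem_disjoint_of_disjoint_connectedComponent [CompactSpace X] [T2Space X]
    {x : X} {F : Set X} (hF : IsClosed F) (hxF : Disjoint (connectedComponent x) F) :
    ∃ Z, IsClopen Z ∧ x ∈ Z ∧ Disjoint Z F := by
  rw [connectedComponent_eq_iInter_isClopen, disjoint_iff_inter_eq_empty, inter_comm] at hxF
  have : Nonempty {s : Set X // IsClopen s ∧ x ∈ s} :=
    ⟨⟨univ, isClopen_univ, mem_univ x⟩⟩
  obtain ⟨Z, hZ⟩ := hF.isCompact.elim_directed_family_closed _ (fun s => s.2.1.isClosed) hxF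
    fun a b => ⟨⟨a.1 ∩ b.1, a.2.1.inter b.2.1, a.2.2, b.2.2⟩,
      inter_subset_left, inter_subset_right⟩
  exact ⟨Z, Z.2.1, Z.2.2, disjoint_iff_inter_eq_empty.mpr (by rwa [inter_comm])⟩

lemma isOpen_image_val_of_subset_interior {K : Set X} {Z : Set K} (hZ : IsOpen Z)
    (hZK : Subtype.val '' Z ⊆ interior K) : IsOpen (Subtype.val '' Z) := by
  rw [isOpen_iff_mem_nhds]
  rintro _ ⟨a, ha, rfl⟩
  rw [← nhdsWithin_eq_nhds.mpr (mem_interior_iff_mem_nhds.mp (hZK ⟨a, ha, rfl⟩))]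
  exact mem_nhds_subtype_iff_nhdsWithin.mp (hZ.mem_nhds ha)

/-- Boundary bumping. -/
theorem connectedComponentIn_inter_frontier_nonempty [CompactSpace X] [T2Space X]
    [PreconnectedSpace X] {K : Set X} (hK : IsClosed K) (hKu : K ≠ univ) {x : X} (hx : x ∈ K) :
    (connectedComponentIn K x ∩ frontier K).Nonempty := by
  by_contra hempty
  have : CompactSpace K := isCompact_iff_compactSpace.mp hK.isCompact
  have hdisj : Disjoint (connectedComponent (⟨x, hx⟩ : K)) (Subtype.val ⁻¹' frontier K) := by
    refine disjoint_left.mpr fun y hy hyF => hempty ⟨y, ?_, hyF⟩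
    rw [connectedComponentIn_eq_image hx]
    exact mem_image_of_mem _ hy
  obtain ⟨Z, hZ, hxZ, hZF⟩ := exists_isClopen_mem_disjoint_of_disjoint_connectedComponent
    (isClosed_frontier.preimage continuous_subtype_val) hdisj
  have hZint : Subtype.val '' Z ⊆ interior K := by
    rintro _ ⟨y, hy, rfl⟩
    by_contra hyint
    rw [hK.frontier_eq] at hZF
    exact hZF.notMem_of_mem_left hy ⟨y.2, hyint⟩
  have hZclopen : IsClopen (Subtype.val '' Z) :=
    ⟨hK.isClosedEmbedding_subtypeVal.isClosedMap _ hZ.isClosed,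
      isOpen_image_val_of_subset_interior hZ.isOpen hZint⟩
  refine hKu (eq_univ_of_univ_subset ?_)
  rw [← hZclopen.eq_univ ⟨x, _, hxZ, rfl⟩]
  exact Subtype.coe_image_subset K Z

lemma exists_connectedComponentIn_notMem_nhds (h : ¬LocallyConnectedSpace X) :
    ∃ U : Set X, IsOpen U ∧ ∃ z ∈ U, connectedComponentIn U z ∉ 𝓝 z := by
  obtain ⟨U, hU, x, -, hC⟩ :
      ∃ U : Set X, IsOpen U ∧ ∃ x ∈ U, ¬IsOpen (connectedComponentIn U x) := by
    simpa [locallyConnectedSpace_iff_connectedComponentIn_open] using h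
  obtain ⟨z, hz, hzn⟩ := not_forall₂.mp (mt isOpen_iff_mem_nhds.mpr hC)
  exact ⟨U, hU, z, connectedComponentIn_subset _ _ hz, connectedComponentIn_eq hz ▸ hzn⟩

lemma infinite_range_of_tendsto_of_notMem {D : ℕ → Set X} {x : ℕ → X} {z : X}
    (hD : ∀ n, IsClosed (D n)) (hz : ∀ n, z ∉ D n) (hx : ∀ n, x n ∈ D n)
    (hxz : Tendsto x atTop (𝓝 z)) : (range D).Infinite := by
  intro hfin
  have hclosed : IsClosed (⋃ n, D n) := by
    rw [← sUnion_range, sUnion_eq_biUnion]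
    exact hfin.isClosed_biUnion (forall_mem_range.mpr hD)
  have hzD : z ∈ ⋃ n, D n :=
    hclosed.mem_of_tendsto hxz (Eventually.of_forall fun n => mem_iUnion.mpr ⟨n, hx n⟩)
  obtain ⟨n, hn⟩ := mem_iUnion.mp hzD
  exact hz n hn

end Topology

lemma Set.Infinite.exists_pairwise_disjoint_comp {α : Type*} {D : ℕ → Set α}
    (hD : ∀ m n, (D m ∩ D n).Nonempty → D m = D n) (hinf : (range D).Infinite) :
    ∃ φ : ℕ → ℕ, Pairwise (Disjoint on (D ∘ φ)) := by
  let e := hinf.natEmbedding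
  choose φ hφ using fun k => (e k).2
  refine ⟨φ, fun k l hkl => disjoint_iff_inter_eq_empty.mpr ?_⟩
  refine not_nonempty_iff_eq_empty.mp fun hne => hkl (e.injective (Subtype.ext ?_))
  simpa only [comp_apply, hφ] using hD _ _ hne

lemma le_diam_connectedComponentIn_closedBall {X : Type*} [MetricSpace X] [CompactSpace X]
    [PreconnectedSpace X] {z q : X} {ε : ℝ} (hK : closedBall z ε ≠ univ)
    (hq : q ∈ closedBall z (ε / 2)) :
    ε / 2 ≤ diam (connectedComponentIn (closedBall z ε) q) := by
  have hε : 0 ≤ ε := by linarith [dist_nonneg.trans (mem_closedBall.mp hq)]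
  have hqK : q ∈ closedBall z ε := closedBall_subset_closedBall (by linarith) hq
  obtain ⟨s, hs, hsK⟩ := connectedComponentIn_inter_frontier_nonempty isClosed_closedBall hK hqK
  have hsz : dist s z = ε := frontier_closedBall_subset_sphere hsK
  have hsq : dist s q ≤ diam (connectedComponentIn (closedBall z ε) q) :=
    dist_le_diam_of_mem (isBounded_closedBall.subset (connectedComponentIn_subset _ _)) hs
      (mem_connectedComponentIn hqK)
  linarith [dist_triangle s q z, mem_closedBall.mp hq]

theorem exists_pairwise_disjoint_continua_of_not_locallyConnectedSpace {X : Type*}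
    [MetricSpace X] [CompactSpace X] [ConnectedSpace X] (h : ¬LocallyConnectedSpace X) :
    ∃ ε > 0, ∃ Y : ℕ → Set X, Pairwise (Disjoint on Y) ∧
      ∀ n, IsCompact (Y n) ∧ IsConnected (Y n) ∧ ε ≤ diam (Y n) := by
  obtain ⟨U, hU, z, hzU, hC⟩ := exists_connectedComponentIn_notMem_nhds h
  obtain ⟨ε, hε, hKU⟩ := nhds_basis_closedBall.mem_iff.mp (hU.mem_nhds hzU)
  have hKu : closedBall z ε ≠ univ := by
    intro hK
    rw [eq_univ_of_univ_subset (hK.symm.subset.trans hKU), connectedComponentIn_univ,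
      PreconnectedSpace.connectedComponent_eq_univ] at hC
    exact hC univ_mem
  have hz : z ∈ closure (connectedComponentIn U z)ᶜ := by
    rwa [closure_compl, mem_compl_iff, mem_interior_iff_mem_nhds]
  obtain ⟨q, hqC, hqz⟩ := mem_closure_iff_seq_limit.mp <|
    isOpen_ball.inter_closure (mem_inter (mem_ball_self (half_pos hε)) hz)
  have hqK : ∀ n, q n ∈ closedBall z ε := fun n =>
    ball_subset_closedBall (ball_subset_ball (half_le_self hε.le) (hqC n).1)
  set D := fun n => connectedComponentIn (closedBall z ε) (q n)
  have hzD : ∀ n, z ∉ D n := fun n hzn => (hqC n).2 <|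
    isPreconnected_connectedComponentIn.subset_connectedComponentIn hzn
      ((connectedComponentIn_subset _ _).trans hKU) (mem_connectedComponentIn (hqK n))
  obtain ⟨φ, hφ⟩ := Set.Infinite.exists_pairwise_disjoint_comp
    (fun _ _ ⟨_, hm, hn⟩ =>
      (connectedComponentIn_eq hm).trans (connectedComponentIn_eq hn).symm)
    (infinite_range_of_tendsto_of_notMem
      (fun n => (isCompact_closedBall z ε).connectedComponentIn _ |>.isClosed) hzD
      (fun n => mem_connectedComponentIn (hqK n)) hqz)
  exact ⟨ε / 2, half_pos hε, D ∘ φ, hφ, fun n =>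
    ⟨(isCompact_closedBall z ε).connectedComponentIn _,
      isConnected_connectedComponentIn_iff.mpr (hqK _),
      le_diam_connectedComponentIn_closedBall hKu (ball_subset_closedBall (hqC _).1)⟩⟩

lemma tendsto_measure_zero_of_pairwise_disjoint {Ω : Type*} [MeasurableSpace Ω] {μ : Measure Ω}
    [IsFiniteMeasure μ] {Y : ℕ → Set Ω} (hY : ∀ n, NullMeasurableSet (Y n) μ)
    (hd : Pairwise (Disjoint on Y)) : Tendsto (fun n => μ (Y n)) atTop (𝓝 0) :=
  ENNReal.tendsto_atTop_zero_of_tsum_ne_top <| by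
    rw [← measure_iUnion₀ (hd.mono fun _ _ h => h.aedisjoint) hY]
    exact measure_ne_top μ _

theorem stmt7_general {X : Type*} [MetricSpace X] [CompactSpace X] [ConnectedSpace X]
    [MeasurableSpace X] [BorelSpace X]
    (μ : Measure X) [IsProbabilityMeasure μ]
    (hμ : ∀ Y : ℕ → Set X,
      (∀ n, (Y n).Nonempty ∧ IsCompact (Y n) ∧ IsConnected (Y n)) →
      Tendsto (fun n => μ (Y n)) atTop (nhds 0) →
      Tendsto (fun n => Metric.diam (Y n)) atTop (nhds 0)) :
    LocallyConnectedSpace X := by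
  by_contra hnl
  obtain ⟨ε, hε, Y, hdisj, hY⟩ :=
    exists_pairwise_disjoint_continua_of_not_locallyConnectedSpace hnl
  have hdiam := hμ Y (fun n => ⟨(hY n).2.1.nonempty, (hY n).1, (hY n).2.1⟩)
    (tendsto_measure_zero_of_pairwise_disjoint
      (fun n => (hY n).1.isClosed.measurableSet.nullMeasurableSet) hdisj)
  exact hε.not_ge (ge_of_tendsto hdiam (Eventually.of_forall fun n => (hY n).2.2))

/-- a continuum 1-dimensional in the sense of measure is locally
connected (a Peano continuum). -/
theorem stmt7 {X : Type*} [MetricSpace X] [CompactSpace X] [ConnectedSpace X]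
    [Nonempty X] [MeasurableSpace X] [BorelSpace X]
    (μ : Measure X) [IsProbabilityMeasure μ]
    (hatomless : ∀ x : X, μ {x} = 0)
    (hμ : ∀ Y : ℕ → Set X,
      (∀ n, (Y n).Nonempty ∧ IsCompact (Y n) ∧ IsConnected (Y n)) →
      Tendsto (fun n => μ (Y n)) atTop (nhds 0) →
      Tendsto (fun n => Metric.diam (Y n)) atTop (nhds 0)) :
    LocallyConnectedSpace X :=
  stmt7_general μ hμ
end

section
/- Every Suslinian continuum has topological (covering) dimension 1. -/
open Set Metric Topology

/-- Covering dimension at most `n`: every finite open cover admits a finite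
open refinement in which each point lies in at most `n + 1` members. -/
def CovDimLE (X : Type) [TopologicalSpace X] (n : ℕ) : Prop :=
  ∀ (ι : Type) (_ : Fintype ι) (U : ι → Set X),
    (∀ i, IsOpen (U i)) → (⋃ i, U i) = Set.univ →
    ∃ (κ : Type) (_ : Fintype κ) (V : κ → Set X),
      (∀ j, IsOpen (V j)) ∧ (⋃ j, V j) = Set.univ ∧
      (∀ j, ∃ i, V j ⊆ U i) ∧
      (∀ x : X, ({j : κ | x ∈ V j}).ncard ≤ n + 1)

lemma fin_exists_min {p : ℕ} (P : Fin p → Prop) (h : ∃ j, P j) :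
    ∃ j, P j ∧ ∀ i, i < j → ¬ P i := by
  classical
  obtain ⟨j, hj⟩ := h
  have hQ : ∃ n : ℕ, ∃ hn : n < p, P ⟨n, hn⟩ := ⟨j.1, j.2, by simpa using hj⟩
  obtain ⟨hn, hPn⟩ := Nat.find_spec hQ
  refine ⟨⟨Nat.find hQ, hn⟩, hPn, ?_⟩
  intro i hi hPi
  have : (i : ℕ) < Nat.find hQ := hi
  exact Nat.find_min hQ this ⟨i.2, by simpa using hPi⟩

lemma exists_clopen_of_connectedComponent_subset {Y : Type*} [TopologicalSpace Y] [CompactSpace Y]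
    [T2Space Y] {p : Y} {U : Set Y} (hU : IsOpen U) (h : connectedComponent p ⊆ U) :
    ∃ N : Set Y, IsClopen N ∧ p ∈ N ∧ N ⊆ U := by
  let Nt := { s : Set Y // IsClopen s ∧ p ∈ s }
  haveI : Nonempty Nt := ⟨⟨univ, isClopen_univ, mem_univ p⟩⟩
  have hdir : Directed (fun x1 x2 => x1 ⊇ x2) (fun s : Nt => s.1) := by
    rintro ⟨s, hs, hps⟩ ⟨t, ht, hpt⟩
    exact ⟨⟨s ∩ t, hs.inter ht, ⟨hps, hpt⟩⟩, inter_subset_left, inter_subset_right⟩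
  have hcl : ∀ s : Nt, IsClosed s.1 := fun s => s.2.1.1
  have hsub : ⋂ s : Nt, s.1 ⊆ U := by
    rw [← connectedComponent_eq_iInter_isClopen p]; exact h
  obtain ⟨s, hsU⟩ := exists_subset_nhds_of_compactSpace hdir hcl (fun y hy => hU.mem_nhds (hsub hy))
  exact ⟨s.1, s.2.1, s.2.2, hsU⟩

lemma bump {Y : Type*} [TopologicalSpace Y] [CompactSpace Y] [T2Space Y] [ConnectedSpace Y]
    [Nontrivial Y] {D : Set Y} (hD : IsClosed D) (hne : (interior D).Nonempty) :
    ∃ t : Set Y, t ⊆ D ∧ IsPreconnected t ∧ t.Nontrivial := by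
  by_cases huniv : interior D = univ
  · refine ⟨univ, ?_, isPreconnected_univ, nontrivial_univ⟩
    rw [← huniv]; exact interior_subset
  obtain ⟨p, hp⟩ := hne
  set U : Set Y := interior D with hUdef
  set Z : Set Y := closure U with hZdef
  have hZc : IsClosed Z := isClosed_closure
  haveI : CompactSpace Z := isCompact_iff_compactSpace.mp hZc.isCompact
  set p' : Z := ⟨p, subset_closure hp⟩ with hp'def
  set U' : Set Z := (fun z : Z => (z : Y)) ⁻¹' U with hU'def
  have hU'o : IsOpen U' := isOpen_interior.preimage continuous_subtype_val
  have hKnot : ¬ connectedComponent p' ⊆ U' := by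
    intro hK
    obtain ⟨N, hNclopen, hpN, hNU⟩ := exists_clopen_of_connectedComponent_subset hU'o hK
    set N0 : Set Y := (fun z : Z => (z : Y)) '' N with hN0def
    have hN0closed : IsClosed N0 :=
      (hNclopen.1.isCompact.image continuous_subtype_val).isClosed
    obtain ⟨O, hOopen, hON⟩ := isOpen_induced_iff.mp hNclopen.2
    have hN0U : N0 ⊆ U := by
      rintro _ ⟨z, hz, rfl⟩; exact hNU hz
    have hN0eq : N0 = O ∩ U := by
      apply Subset.antisymm
      · rintro _ ⟨z, hz, rfl⟩
        exact ⟨by rw [← hON] at hz; exact hz, hNU hz⟩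
      · rintro x ⟨hxO, hxU⟩
        exact ⟨⟨x, subset_closure hxU⟩, by rw [← hON]; exact hxO, rfl⟩
    have hN0open : IsOpen N0 := by rw [hN0eq]; exact hOopen.inter isOpen_interior
    have hpN0 : p ∈ N0 := ⟨p', hpN, rfl⟩
    rcases isClopen_iff.mp ⟨hN0closed, hN0open⟩ with h0 | h0
    · rw [h0] at hpN0; exact hpN0
    · exact huniv (univ_subset_iff.mp (h0 ▸ hN0U))
  obtain ⟨q', hq'K, hq'U⟩ := not_subset.mp hKnot
  refine ⟨(fun z : Z => (z : Y)) '' connectedComponent p', ?_, ?_, ?_⟩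
  · rintro _ ⟨z, -, rfl⟩
    exact closure_minimal interior_subset hD z.2
  · exact isPreconnected_connectedComponent.image _ continuous_subtype_val.continuousOn
  · refine ⟨p, ⟨p', mem_connectedComponent, rfl⟩, q', ⟨q', hq'K, rfl⟩, ?_⟩
    intro hpq
    apply hq'U
    show (q' : Y) ∈ U
    rw [← hpq]; exact hp
lemma td_iUnion {Y : Type*} [MetricSpace Y] [CompactSpace Y] {m : ℕ} {F : Fin m → Set Y}
    (hcl : ∀ k, IsClosed (F k))
    (htd : ∀ k, ∀ t ⊆ F k, IsPreconnected t → t.Subsingleton) :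
    ∀ t ⊆ ⋃ k, F k, IsPreconnected t → t.Subsingleton := by
  intro t ht hpc
  by_contra hns
  rw [Set.not_subsingleton_iff] at hns
  set C : Set Y := closure t with hCdef
  have hCc : IsClosed C := isClosed_closure
  have hCsub : C ⊆ ⋃ k, F k := closure_minimal ht (isClosed_iUnion_of_finite hcl)
  have hCpc : IsPreconnected C := hpc.closure
  have hCnt : C.Nontrivial := hns.mono subset_closure
  haveI : CompactSpace C := isCompact_iff_compactSpace.mp hCc.isCompact
  haveI : ConnectedSpace C := isConnected_iff_connectedSpace.mp ⟨hCnt.nonempty, hCpc⟩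
  haveI : Nontrivial C := Set.nontrivial_coe_sort.mpr hCnt
  set D : Fin m → Set C := fun k => (fun z : C => (z : Y)) ⁻¹' F k with hDdef
  have hDcl : ∀ k, IsClosed (D k) := fun k => (hcl k).preimage continuous_subtype_val
  have hDun : ⋃ k, D k = univ := by
    ext z
    simp only [mem_iUnion, mem_univ, iff_true, hDdef, mem_preimage]
    exact mem_iUnion.mp (hCsub z.2)
  obtain ⟨k, hk⟩ := nonempty_interior_of_iUnion_of_closed hDcl hDun
  obtain ⟨t', ht'D, ht'pc, ht'nt⟩ := bump (hDcl k) hk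
  obtain ⟨a, ha, b, hb, hab⟩ := ht'nt
  have hsub : ((fun z : C => (z : Y)) '' t').Subsingleton := by
    apply htd k
    · rintro _ ⟨z, hz, rfl⟩; exact ht'D hz
    · exact ht'pc.image _ continuous_subtype_val.continuousOn
  exact hab (Subtype.ext (hsub ⟨a, ha, rfl⟩ ⟨b, hb, rfl⟩))

lemma clopen_partition {Y : Type*} [MetricSpace Y] [CompactSpace Y] {m : ℕ} {F : Set Y}
    (hFc : IsClosed F)
    (htd : ∀ t ⊆ F, IsPreconnected t → t.Subsingleton)
    {V : Fin m → Set Y} (hV : ∀ k, IsOpen (V k)) (hcov : F ⊆ ⋃ k, V k) :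
    ∃ E : Fin m → Set Y, (∀ k, IsCompact (E k)) ∧ (∀ k, E k ⊆ V k) ∧ (⋃ k, E k) = F ∧
      ∀ k k', k ≠ k' → Disjoint (E k) (E k') := by
  classical
  haveI : CompactSpace F := isCompact_iff_compactSpace.mp hFc.isCompact
  haveI : TotallyDisconnectedSpace F := by
    constructor
    intro t _ hpc
    have hsub : ((fun z : F => (z : Y)) '' t).Subsingleton := by
      apply htd
      · rintro _ ⟨z, hz, rfl⟩; exact z.2
      · exact hpc.image _ continuous_subtype_val.continuousOn
    intro a ha b hb
    exact Subtype.ext (hsub ⟨a, ha, rfl⟩ ⟨b, hb, rfl⟩)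
  set W : Fin m → Set F := fun k => (fun z : F => (z : Y)) ⁻¹' V k with hWdef
  have hWo : ∀ k, IsOpen (W k) := fun k => (hV k).preimage continuous_subtype_val
  have hNex : ∀ z : F, ∃ N : Set F, IsClopen N ∧ z ∈ N ∧ ∃ k, N ⊆ W k := by
    intro z
    obtain ⟨k, hk⟩ := mem_iUnion.mp (hcov z.2)
    obtain ⟨N, h1, h2, h3⟩ := compact_exists_isClopen_in_isOpen (hWo k) hk
    exact ⟨N, h1, h2, k, h3⟩
  choose N hNclop hNmem hNsub using hNex
  obtain ⟨s, hs⟩ := isCompact_univ.elim_finite_subcover N (fun z => (hNclop z).2)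
    (fun z _ => mem_iUnion.mpr ⟨z, hNmem z⟩)
  set p := s.card with hpdef
  set e := s.equivFin with hedef
  set L : Fin p → Set F := fun j => N ((e.symm j : {x // x ∈ s}) : F) with hLdef
  have hLclop : ∀ j, IsClopen (L j) := fun j => hNclop _
  set c : Fin p → Fin m := fun j => Classical.choose (hNsub ((e.symm j : {x // x ∈ s}) : F))
    with hcdef
  have hLW : ∀ j, L j ⊆ W (c j) := fun j => Classical.choose_spec (hNsub _)
  set M : Fin p → Set F := fun j => L j \ ⋃ i, ⋃ (_ : i < j), L i with hMdef
  have hMclop : ∀ j, IsClopen (M j) := by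
    intro j
    refine (hLclop j).diff ⟨?_, ?_⟩
    · exact isClosed_iUnion_of_finite (fun i => isClosed_iUnion_of_finite fun _ => (hLclop i).1)
    · exact isOpen_iUnion (fun i => isOpen_iUnion fun _ => (hLclop i).2)
  have hMsubL : ∀ j, M j ⊆ L j := fun j => diff_subset
  have hMdisj : ∀ i j, i ≠ j → Disjoint (M i) (M j) := by
    intro i j hij
    rcases lt_or_gt_of_ne hij with h | h
    · exact Set.disjoint_left.mpr fun z hzi hzj =>
        hzj.2 (mem_iUnion.mpr ⟨i, mem_iUnion.mpr ⟨h, hzi.1⟩⟩)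
    · exact Set.disjoint_left.mpr fun z hzi hzj =>
        hzi.2 (mem_iUnion.mpr ⟨j, mem_iUnion.mpr ⟨h, hzj.1⟩⟩)
  have hMcov : ∀ z : F, ∃ j, z ∈ M j := by
    intro z
    have hL : ∃ j, z ∈ L j := by
      have h2 := hs (mem_univ z)
      rw [mem_iUnion₂] at h2
      obtain ⟨w, hw, hzw⟩ := h2
      refine ⟨e ⟨w, hw⟩, ?_⟩
      simp only [hLdef, Equiv.symm_apply_apply]
      exact hzw
    obtain ⟨j, hj, hmin⟩ := fin_exists_min _ hL
    refine ⟨j, hj, fun hz => ?_⟩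
    obtain ⟨i, hi⟩ := mem_iUnion.mp hz
    obtain ⟨hij, hzi⟩ := mem_iUnion.mp hi
    exact hmin i hij hzi
  set E' : Fin m → Set F := fun k => ⋃ j, ⋃ (_ : c j = k), M j with hE'def
  have hE'cl : ∀ k, IsClosed (E' k) :=
    fun k => isClosed_iUnion_of_finite (fun j => isClosed_iUnion_of_finite fun _ => (hMclop j).1)
  refine ⟨fun k => (fun z : F => (z : Y)) '' E' k, ?_, ?_, ?_, ?_⟩
  · exact fun k => ((hE'cl k).isCompact).image continuous_subtype_val
  · rintro k _ ⟨z, hz, rfl⟩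
    obtain ⟨j, hj⟩ := mem_iUnion.mp hz
    obtain ⟨hcj, hzj⟩ := mem_iUnion.mp hj
    exact hcj ▸ hLW j (hMsubL j hzj)
  · rw [← image_iUnion]
    have huniv : ⋃ k, E' k = univ := by
      ext z
      simp only [mem_univ, iff_true]
      obtain ⟨j, hj⟩ := hMcov z
      exact mem_iUnion.mpr ⟨c j, mem_iUnion.mpr ⟨j, mem_iUnion.mpr ⟨rfl, hj⟩⟩⟩
    rw [huniv, image_univ, Subtype.range_coe]
  · intro k k' hkk'
    rw [Set.disjoint_image_iff Subtype.val_injective]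
    refine Set.disjoint_left.mpr fun z hz hz' => ?_
    obtain ⟨j, hj⟩ := mem_iUnion.mp hz
    obtain ⟨hcj, hzj⟩ := mem_iUnion.mp hj
    obtain ⟨j', hj'⟩ := mem_iUnion.mp hz'
    obtain ⟨hcj', hzj'⟩ := mem_iUnion.mp hj'
    have hne : j ≠ j' := by
      intro h; apply hkk'; rw [← hcj, ← hcj', h]
    exact Set.disjoint_left.mp (hMdisj j j' hne) hzj hzj'

lemma separation {Y : Type*} [MetricSpace Y] [CompactSpace Y] {m : ℕ}
    {E V : Fin m → Set Y} (hE : ∀ k, IsCompact (E k)) (hEV : ∀ k, E k ⊆ V k)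
    (hVo : ∀ k, IsOpen (V k)) (hdisj : ∀ k k', k ≠ k' → Disjoint (E k) (E k')) :
    ∃ B : Fin m → Set Y, (∀ k, IsOpen (B k)) ∧ (∀ k, B k ⊆ V k) ∧ (∀ k, E k ⊆ B k) ∧
      ∀ k k', k ≠ k' → Disjoint (B k) (B k') := by
  classical
  set B : Fin m → Set Y := fun k => V k ∩
    ⋂ j, {y | EMetric.infEdist y (E k) < EMetric.infEdist y (E j) ∨ j = k} with hBdef
  refine ⟨B, ?_, fun k => inter_subset_left, ?_, ?_⟩
  · intro k
    apply (hVo k).inter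
    apply isOpen_iInter_of_finite
    intro j
    by_cases h : j = k
    · have : {y : Y | EMetric.infEdist y (E k) < EMetric.infEdist y (E j) ∨ j = k} = univ := by
        ext y; simp [h]
      rw [this]; exact isOpen_univ
    · have : {y : Y | EMetric.infEdist y (E k) < EMetric.infEdist y (E j) ∨ j = k} =
          {y : Y | EMetric.infEdist y (E k) < EMetric.infEdist y (E j)} := by
        ext y; simp [h]
      rw [this]
      exact isOpen_lt EMetric.continuous_infEdist EMetric.continuous_infEdist
  · intro k y hy
    refine ⟨hEV k hy, mem_iInter.mpr fun j => ?_⟩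
    by_cases h : j = k
    · exact Or.inr h
    · left
      have h0 : EMetric.infEdist y (E k) = 0 := EMetric.infEdist_zero_of_mem hy
      rw [h0, pos_iff_ne_zero]
      intro hz
      have : y ∈ closure (E j) := EMetric.mem_closure_iff_infEdist_zero.mpr hz
      rw [((hE j).isClosed).closure_eq] at this
      exact Set.disjoint_left.mp (hdisj j k h) this hy
  · intro k k' hkk'
    refine Set.disjoint_left.mpr fun y hy hy' => ?_
    have h1 := mem_iInter.mp hy.2 k'
    have h2 := mem_iInter.mp hy'.2 k
    rcases h1 with h1 | h1
    · rcases h2 with h2 | h2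
      · exact absurd h2 (not_lt_of_gt h1)
      · exact hkk' h2
    · exact hkk' h1.symm

lemma good_radius {X : Type} [MetricSpace X] [CompactSpace X]
    (hSuslinian : ∀ S : Set (Set X),
      (∀ A ∈ S, A.Nonempty ∧ IsCompact A ∧ IsConnected A ∧ A.Nontrivial) →
      S.Pairwise Disjoint → S.Countable)
    (x : X) {ε : ℝ} (hε : 0 < ε) :
    ∃ r : ℝ, 0 < r ∧ r < ε ∧ ∀ t ⊆ sphere x r, IsPreconnected t → t.Subsingleton := by
  by_contra hcon
  push_neg at hcon
  classical
  set f : ℝ → Set X := fun r =>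
    if h : 0 < r ∧ r < ε then closure (hcon r h.1 h.2).choose else ∅ with hfdef
  have hf : ∀ r, 0 < r → r < ε →
      f r ⊆ sphere x r ∧ IsConnected (f r) ∧ (f r).Nontrivial ∧ IsClosed (f r) := by
    intro r h1 h2
    obtain ⟨hsub, hpc, hns⟩ := (hcon r h1 h2).choose_spec
    have hfr : f r = closure (hcon r h1 h2).choose := by
      rw [hfdef]; simp only [dif_pos (⟨h1, h2⟩ : 0 < r ∧ r < ε)]
    rw [hfr]
    exact ⟨closure_minimal hsub isClosed_sphere,
      ⟨hns.nonempty.closure, hpc.closure⟩,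
      hns.mono subset_closure, isClosed_closure⟩
  have hcnt : (Ioo (0:ℝ) ε).Countable := by
    have hS := hSuslinian (f '' Ioo 0 ε) ?_ ?_
    · refine Set.MapsTo.countable_of_injOn (mapsTo_image f _) ?_ hS
      intro r hr r' hr' heq
      obtain ⟨h1, h2, h3, h4⟩ := hf r hr.1 hr.2
      obtain ⟨h1', h2', h3', h4'⟩ := hf r' hr'.1 hr'.2
      obtain ⟨y, hy⟩ := h3.nonempty
      have hyr : dist y x = r := h1 hy
      have hyr' : dist y x = r' := h1' (heq ▸ hy)
      rw [← hyr, ← hyr']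
    · rintro A ⟨r, hr, rfl⟩
      obtain ⟨h1, h2, h3, h4⟩ := hf r hr.1 hr.2
      exact ⟨h3.nonempty, h4.isCompact, h2, h3⟩
    · rintro A ⟨r, hr, rfl⟩ B ⟨r', hr', rfl⟩ hAB
      have hrr' : r ≠ r' := fun h => hAB (by rw [h])
      obtain ⟨h1, _, _, _⟩ := hf r hr.1 hr.2
      obtain ⟨h1', _, _, _⟩ := hf r' hr'.1 hr'.2
      refine Set.disjoint_left.mpr fun y hy hy' => hrr' ?_
      rw [← h1 hy, ← h1' hy']
  have := hcnt.measure_zero MeasureTheory.volume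
  rw [Real.volume_Ioo] at this
  simp only [sub_zero, ENNReal.ofReal_eq_zero] at this
  linarith

/-- every Suslinian continuum has covering dimension exactly 1. -/
theorem stmt8 {X : Type} [MetricSpace X] [CompactSpace X] [ConnectedSpace X]
    [Nonempty X] [Nontrivial X]
    (hSuslinian : ∀ S : Set (Set X),
      (∀ A ∈ S, A.Nonempty ∧ IsCompact A ∧ IsConnected A ∧ A.Nontrivial) →
      S.Pairwise Disjoint → S.Countable) :
    CovDimLE X 1 ∧ ¬ CovDimLE X 0 := by
  constructor
  · intro ι _inst U hUo hUcov
    obtain ⟨δ, hδ, hleb⟩ := lebesgue_number_lemma_of_metric isCompact_univ hUo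
      (by rw [hUcov])
    choose r hr0 hrδ hrtd using fun x : X => good_radius hSuslinian x hδ
    obtain ⟨s, hs⟩ := isCompact_univ.elim_finite_subcover (fun x => ball x (r x))
      (fun x => isOpen_ball) (fun y _ => mem_iUnion.mpr ⟨y, mem_ball_self (hr0 y)⟩)
    set m := s.card with hm
    set e := s.equivFin with he
    set cc : Fin m → X := fun k => ((e.symm k : {x // x ∈ s}) : X) with hccdef
    set V : Fin m → Set X := fun k => ball (cc k) (r (cc k)) with hVdef
    have hVo : ∀ k, IsOpen (V k) := fun k => isOpen_ball
    have hVcov : ∀ y : X, ∃ k, y ∈ V k := by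
      intro y
      have h2 := hs (mem_univ y)
      rw [mem_iUnion₂] at h2
      obtain ⟨w, hw, hyw⟩ := h2
      refine ⟨e ⟨w, hw⟩, ?_⟩
      simp only [hVdef, hccdef, Equiv.symm_apply_apply]
      exact hyw
    have hVU : ∀ k, ∃ i, V k ⊆ U i := by
      intro k
      obtain ⟨i, hi⟩ := hleb (cc k) (mem_univ _)
      exact ⟨i, (ball_subset_ball (hrδ (cc k)).le).trans hi⟩
    set Fr : Fin m → Set X := fun k => frontier (V k) with hFrdef
    have hFrcl : ∀ k, IsClosed (Fr k) := fun k => isClosed_frontier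
    have hFrtd : ∀ k, ∀ t ⊆ Fr k, IsPreconnected t → t.Subsingleton := by
      intro k t ht hpc
      exact hrtd (cc k) t (ht.trans frontier_ball_subset_sphere) hpc
    set F : Set X := ⋃ k, Fr k with hFdef
    have hFc : IsClosed F := isClosed_iUnion_of_finite hFrcl
    have hFtd := td_iUnion hFrcl hFrtd
    obtain ⟨E, hEcomp, hEV, hEun, hEdisj⟩ := clopen_partition hFc hFtd hVo
      (fun y _ => mem_iUnion.mpr (hVcov y))
    obtain ⟨B, hBo, hBV, hEB, hBdisj⟩ := separation hEcomp hEV hVo hEdisj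
    set A : Fin m → Set X := fun k => V k \ ⋃ j, ⋃ (_ : j < k), closure (V j) with hAdef
    have hAo : ∀ k, IsOpen (A k) := fun k => (hVo k).sdiff
      (isClosed_iUnion_of_finite fun j => isClosed_iUnion_of_finite fun _ => isClosed_closure)
    have hAV : ∀ k, A k ⊆ V k := fun k => diff_subset
    have hAdisj : ∀ k k', k ≠ k' → Disjoint (A k) (A k') := by
      intro k k' hkk'
      rcases lt_or_gt_of_ne hkk' with h | h
      · exact Set.disjoint_left.mpr fun z hz hz' =>
          hz'.2 (mem_iUnion.mpr ⟨k, mem_iUnion.mpr ⟨h, subset_closure hz.1⟩⟩)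
      · exact Set.disjoint_left.mpr fun z hz hz' =>
          hz.2 (mem_iUnion.mpr ⟨k', mem_iUnion.mpr ⟨h, subset_closure hz'.1⟩⟩)
    have hAcov : ∀ y : X, y ∉ F → ∃ k, y ∈ A k := by
      intro y hyF
      have hcl : ∃ k, y ∈ closure (V k) := by
        obtain ⟨k, hk⟩ := hVcov y; exact ⟨k, subset_closure hk⟩
      obtain ⟨k, hk, hmin⟩ := fin_exists_min _ hcl
      have hyV : y ∈ V k := by
        by_contra hyV
        apply hyF
        rw [hFdef]
        apply mem_iUnion.mpr ⟨k, ?_⟩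
        rw [hFrdef]
        simp only [(hVo k).frontier_eq]
        exact ⟨hk, hyV⟩
      refine ⟨k, hyV, fun hy2 => ?_⟩
      obtain ⟨j, hj⟩ := mem_iUnion.mp hy2
      obtain ⟨hjk, hyj⟩ := mem_iUnion.mp hj
      exact hmin j hjk hyj
    refine ⟨Fin m ⊕ Fin m, inferInstance, Sum.elim A B, ?_, ?_, ?_, ?_⟩
    · rintro (k | k)
      exacts [hAo k, hBo k]
    · rw [eq_univ_iff_forall]
      intro y
      by_cases hyF : y ∈ F
      · have : y ∈ ⋃ k, E k := by rw [hEun]; exact hyF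
        obtain ⟨k, hk⟩ := mem_iUnion.mp this
        exact mem_iUnion.mpr ⟨Sum.inr k, hEB k hk⟩
      · obtain ⟨k, hk⟩ := hAcov y hyF
        exact mem_iUnion.mpr ⟨Sum.inl k, hk⟩
    · rintro (k | k)
      · obtain ⟨i, hi⟩ := hVU k
        exact ⟨i, (hAV k).trans hi⟩
      · obtain ⟨i, hi⟩ := hVU k
        exact ⟨i, (hBV k).trans hi⟩
    · intro y
      have hsub : {j : Fin m ⊕ Fin m | y ∈ Sum.elim A B j} ⊆
          (Sum.inl '' {k | y ∈ A k}) ∪ (Sum.inr '' {k | y ∈ B k}) := by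
        rintro (k | k) h
        · exact Or.inl ⟨k, h, rfl⟩
        · exact Or.inr ⟨k, h, rfl⟩
      have hA1 : {k | y ∈ A k}.ncard ≤ 1 := by
        rw [Set.ncard_le_one (Set.toFinite _)]
        intro a ha b hb
        by_contra hab
        exact Set.disjoint_left.mp (hAdisj a b hab) ha hb
      have hB1 : {k | y ∈ B k}.ncard ≤ 1 := by
        rw [Set.ncard_le_one (Set.toFinite _)]
        intro a ha b hb
        by_contra hab
        exact Set.disjoint_left.mp (hBdisj a b hab) ha hb
      calc ({j : Fin m ⊕ Fin m | y ∈ Sum.elim A B j}).ncard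
          ≤ ((Sum.inl '' {k | y ∈ A k}) ∪ (Sum.inr '' {k | y ∈ B k})).ncard :=
            Set.ncard_le_ncard hsub (Set.toFinite _)
        _ ≤ (Sum.inl '' {k | y ∈ A k}).ncard + (Sum.inr '' {k | y ∈ B k}).ncard :=
            Set.ncard_union_le _ _
        _ ≤ 1 + 1 := by
            rw [Set.ncard_image_of_injective _ Sum.inl_injective,
              Set.ncard_image_of_injective _ Sum.inr_injective]
            exact add_le_add hA1 hB1
  · intro h
    obtain ⟨a, b, hab⟩ := exists_pair_ne X
    obtain ⟨κ, instκ, V, hVo, hVcov, hVref, hVmul⟩ := h Bool inferInstance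
      (fun i => if i then ({a}ᶜ : Set X) else {b}ᶜ)
      (by intro i; cases i <;> exact isOpen_compl_singleton)
      (by
        rw [eq_univ_iff_forall]
        intro z
        by_cases hz : z = a
        · refine mem_iUnion.mpr ⟨false, ?_⟩
          simp only [if_neg Bool.false_ne_true, mem_compl_iff, mem_singleton_iff]
          rw [hz]; exact hab
        · exact mem_iUnion.mpr ⟨true, by simpa using hz⟩)
    haveI := instκ
    have ha : ∃ j, a ∈ V j := by
      have : a ∈ ⋃ j, V j := by rw [hVcov]; trivial
      exact mem_iUnion.mp this
    obtain ⟨j0, hj0⟩ := ha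
    set t : Set X := ⋃ j, ⋃ (_ : j ≠ j0), V j with htdef
    have hto : IsOpen t := isOpen_iUnion fun j => isOpen_iUnion fun _ => hVo j
    have hdisj : ∀ z, z ∈ V j0 → z ∈ t → False := by
      intro z hz0 hzt
      obtain ⟨j, hj⟩ := mem_iUnion.mp hzt
      obtain ⟨hjj0, hzj⟩ := mem_iUnion.mp hj
      have hpair : ({j0, j} : Set κ) ⊆ {j' | z ∈ V j'} := by
        rintro j' (rfl | rfl)
        exacts [hz0, hzj]
      have h2 : ({j0, j} : Set κ).ncard = 2 := Set.ncard_pair (Ne.symm hjj0)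
      have := Set.ncard_le_ncard hpair (Set.toFinite _)
      have := hVmul z
      omega
    have htempty : t = ∅ := by
      by_contra hne
      rw [← Ne, ← nonempty_iff_ne_empty] at hne
      have := (isPreconnected_univ : IsPreconnected (univ : Set X)) (V j0) t (hVo j0) hto
        (by
          intro z _
          obtain ⟨j, hj⟩ := mem_iUnion.mp (by rw [hVcov]; trivial : z ∈ ⋃ j, V j)
          by_cases hjj0 : j = j0
          · exact Or.inl (hjj0 ▸ hj)
          · exact Or.inr (mem_iUnion.mpr ⟨j, mem_iUnion.mpr ⟨hjj0, hj⟩⟩))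
        ⟨a, trivial, hj0⟩ ⟨hne.choose, trivial, hne.choose_spec⟩
      obtain ⟨z, -, hz1, hz2⟩ := this
      exact hdisj z hz1 hz2
    have huniv : ∀ z : X, z ∈ V j0 := by
      intro z
      obtain ⟨j, hj⟩ := mem_iUnion.mp (by rw [hVcov]; trivial : z ∈ ⋃ j, V j)
      by_cases hjj0 : j = j0
      · exact hjj0 ▸ hj
      · exfalso
        have : z ∈ t := mem_iUnion.mpr ⟨j, mem_iUnion.mpr ⟨hjj0, hj⟩⟩
        rw [htempty] at this
        exact this
    obtain ⟨i, hi⟩ := hVref j0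
    cases i
    · have := hi (huniv b)
      simp at this
    · have := hi (huniv a)
      simp at this
end

section
/- Let X be a regular curve (a continuum in which every point has a neighborhood basis of open sets with finite boundary) and let U be a connected open subset of X with |∂U| = n and diam(U) > ε. Then there is a connected open set V ⊆ U with dist(V, ∂U) ≥ ε/(4n) and diam(V) ≥ ε/(4n). -/
open Set Metric

section Helpers

variable {X : Type*} [MetricSpace X] [CompactSpace X] [ConnectedSpace X]

lemma prec_frontier {s W : Set X} (hs : IsPreconnected s) (hW : IsOpen W)
    (h1 : (s ∩ W).Nonempty) (h2 : (s \ closure W).Nonempty) :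
    (s ∩ frontier W).Nonempty := by
  by_contra h
  rw [Set.not_nonempty_iff_eq_empty] at h
  have hsub : s ⊆ W ∪ (closure W)ᶜ := by
    intro z hz
    by_cases hzW : z ∈ W
    · exact Or.inl hzW
    · refine Or.inr fun hzc => ?_
      have : z ∈ s ∩ frontier W := ⟨hz, by rw [hW.frontier_eq]; exact ⟨hzc, hzW⟩⟩
      simp [h] at this
  obtain ⟨z, hz⟩ := hs W (closure W)ᶜ hW isClosed_closure.isOpen_compl hsub h1
    ⟨h2.choose, h2.choose_spec.1, h2.choose_spec.2⟩
  exact hz.2.2 (subset_closure hz.2.1)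

/-- Boundary bumping, closed version: a connected component of a proper closed set
meets the frontier of that set. -/
lemma bb1 {K : Set X} (hK : IsClosed K) (hKne : K ≠ univ) {x : X} (hx : x ∈ K) :
    (connectedComponentIn K x ∩ frontier K).Nonempty := by
  by_contra h
  rw [Set.not_nonempty_iff_eq_empty] at h
  have hcompK : connectedComponentIn K x ⊆ K := connectedComponentIn_subset K x
  have hsubint : connectedComponentIn K x ⊆ interior K := by
    intro z hz
    by_cases hzi : z ∈ interior K
    · exact hzi
    · have : z ∈ connectedComponentIn K x ∩ frontier K :=
        ⟨hz, by rw [hK.frontier_eq]; exact ⟨hcompK hz, hzi⟩⟩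
      simp [h] at this
  haveI : CompactSpace K := isCompact_iff_compactSpace.mp hK.isCompact
  set x' : K := ⟨x, hx⟩
  have hcc := connectedComponent_eq_iInter_isClopen x'
  set O' : Set K := Subtype.val ⁻¹' interior K with hO'def
  have hO'open : IsOpen O' := isOpen_interior.preimage continuous_subtype_val
  have hccsub : connectedComponent x' ⊆ O' := by
    intro z hz
    have hzm : (z : X) ∈ connectedComponentIn K x := by
      rw [connectedComponentIn_eq_image hx]; exact ⟨z, hz, rfl⟩
    exact hsubint hzm
  have hinter : (O'ᶜ ∩ ⋂ s : {s : Set K // IsClopen s ∧ x' ∈ s}, (s : Set K)) = ∅ := by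
    rw [← hcc]
    apply Set.eq_empty_of_forall_notMem
    rintro z ⟨hz1, hz2⟩
    exact hz1 (hccsub hz2)
  obtain ⟨t, ht⟩ := (hO'open.isClosed_compl.isCompact).elim_finite_subfamily_closed
    _ (fun s => s.2.1.isClosed) hinter
  set Z : Set K := ⋂ s ∈ t, (s : Set K) with hZdef
  have hZclopen : IsClopen Z := isClopen_biInter_finset fun s _ => s.2.1
  have hxZ : x' ∈ Z := mem_biInter fun s _ => s.2.2
  have hZO' : Z ⊆ O' := by
    intro z hz
    by_contra hzc
    have : z ∈ O'ᶜ ∩ ⋂ s ∈ t, (s : Set K) := ⟨hzc, hz⟩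
    rw [ht] at this
    exact this
  -- the image of Z in X is clopen
  set Zim : Set X := Subtype.val '' Z with hZimdef
  have hZimcl : IsClosed Zim :=
    (hZclopen.isClosed.isCompact.image continuous_subtype_val).isClosed
  have hZimint : Zim ⊆ interior K := by
    rintro _ ⟨z, hz, rfl⟩
    exact hZO' hz
  obtain ⟨O₂, hO₂open, hO₂⟩ := isOpen_induced_iff.mp hZclopen.isOpen
  have hZim2 : Zim = interior K ∩ O₂ := by
    apply Subset.antisymm
    · rintro _ ⟨z, hz, rfl⟩
      refine ⟨hZO' hz, ?_⟩
      have : z ∈ Subtype.val ⁻¹' O₂ := by rw [hO₂]; exact hz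
      exact this
    · rintro w ⟨hw1, hw2⟩
      have hwK : w ∈ K := interior_subset hw1
      refine ⟨⟨w, hwK⟩, ?_, rfl⟩
      rw [← hO₂]; exact hw2
  have hZimopen : IsOpen Zim := by rw [hZim2]; exact isOpen_interior.inter hO₂open
  have hZimclopen : IsClopen Zim := ⟨hZimcl, hZimopen⟩
  have : Zim = univ := hZimclopen.eq_univ ⟨x, ⟨x', hxZ, rfl⟩⟩
  apply hKne
  apply Subset.antisymm (subset_univ K)
  calc univ = Zim := this.symm
    _ ⊆ interior K := hZimint
    _ ⊆ K := interior_subset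

/-- Boundary bumping, open version: the closure of a connected component of a proper
open set meets the frontier of that set. -/
lemma bb2 {A : Set X} (hA : IsOpen A) (hAne : A ≠ univ) {x : X} (hx : x ∈ A) :
    (closure (connectedComponentIn A x) ∩ frontier A).Nonempty := by
  by_contra h
  rw [Set.not_nonempty_iff_eq_empty] at h
  set C := connectedComponentIn A x with hCdef
  have hCA : C ⊆ A := connectedComponentIn_subset A x
  have hclA : closure C ⊆ A := by
    intro z hz
    have hz2 : z ∈ closure A := closure_mono hCA hz
    rcases (closure_eq_self_union_frontier A ▸ hz2) with h1 | h1
    · exact h1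
    · exfalso
      have hmem : z ∈ closure C ∩ frontier A := ⟨hz, h1⟩
      rw [h] at hmem
      exact hmem
  have hxC : x ∈ C := mem_connectedComponentIn hx
  have hclC : closure C = C :=
    Subset.antisymm
      (isPreconnected_connectedComponentIn.closure.subset_connectedComponentIn
        (subset_closure hxC) hclA) subset_closure
  have hCclosed : IsClosed C := hclC ▸ isClosed_closure
  obtain ⟨δ, hδpos, hth⟩ := hCclosed.isCompact.exists_cthickening_subset_open hA hCA
  set K := cthickening δ C with hKdef
  have hKclosed : IsClosed K := isClosed_cthickening
  have hCK : C ⊆ K := self_subset_cthickening C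
  have hKne : K ≠ univ := by
    obtain ⟨y, hy⟩ := (ne_univ_iff_exists_notMem A).mp hAne
    exact ne_univ_iff_exists_notMem K |>.mpr ⟨y, fun hyK => hy (hth hyK)⟩
  obtain ⟨w, hwcomp, hwfr⟩ := bb1 hKclosed hKne (hCK hxC)
  have hcompC : connectedComponentIn K x ⊆ C :=
    isPreconnected_connectedComponentIn.subset_connectedComponentIn
      (mem_connectedComponentIn (hCK hxC)) ((connectedComponentIn_subset K x).trans hth)
  have hCint : C ⊆ interior K :=
    (self_subset_thickening hδpos C).trans
      (interior_maximal (thickening_subset_cthickening δ C) isOpen_thickening)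
  exact hwfr.2 (hCint (hcompC hwcomp))

/-- Rim-finiteness implies components of open sets are open. -/
lemma lc_open
    (hreg : ∀ x : X, ∀ ε > (0 : ℝ), ∃ U : Set X,
      IsOpen U ∧ x ∈ U ∧ U ⊆ Metric.ball x ε ∧ (frontier U).Finite)
    {A : Set X} (hA : IsOpen A) (hAne : A ≠ univ) (x : X) :
    IsOpen (connectedComponentIn A x) := by
  by_cases hx : x ∈ A
  swap
  · rw [connectedComponentIn_eq_empty hx]; exact isOpen_empty
  set C := connectedComponentIn A x with hCdef
  rw [isOpen_iff_forall_mem_open]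
  intro y hy
  by_contra hcon
  push_neg at hcon
  have hyA : y ∈ A := connectedComponentIn_subset A x hy
  have hCy : C = connectedComponentIn A y := connectedComponentIn_eq hy
  have hfrne : (frontier A).Nonempty := by
    by_contra hf
    rw [Set.not_nonempty_iff_eq_empty] at hf
    have hclop : IsClopen A := isClopen_iff_frontier_eq_empty.mpr hf
    exact hAne (hclop.eq_univ ⟨x, hx⟩)
  have hynf : y ∉ frontier A := fun hf => (hA.frontier_eq ▸ hf).2 hyA
  set d1 := Metric.infDist y (frontier A) with hd1def
  have hd1 : 0 < d1 :=
    (isClosed_frontier.notMem_iff_infDist_pos hfrne).mp hynf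
  obtain ⟨η₀, hη₀, hball⟩ := Metric.isOpen_iff.mp hA y hyA
  set ρ := min η₀ d1 / 4 with hρdef
  have hρ : 0 < ρ := by positivity
  obtain ⟨W, hWopen, hyW, hWball, hWfr⟩ := hreg y ρ hρ
  have hclW : closure W ⊆ closedBall y ρ :=
    closure_minimal (hWball.trans ball_subset_closedBall) isClosed_closedBall
  have hρη₀ : ρ < η₀ := by
    have : min η₀ d1 ≤ η₀ := min_le_left _ _
    rw [hρdef]; linarith
  have h4ρd1 : 4 * ρ ≤ d1 := by
    have : min η₀ d1 ≤ d1 := min_le_right _ _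
    rw [hρdef]; linarith
  have hclWA : closure W ⊆ A := fun z hz =>
    hball (lt_of_le_of_lt (mem_closedBall.mp (hclW hz)) hρη₀)
  set E := frontier W with hEdef
  set S := ⋃ z ∈ E \ C, connectedComponentIn A z with hSdef
  have hclaim : W \ C ⊆ S := by
    rintro y' ⟨hy'W, hy'C⟩
    have hy'A : y' ∈ A := hclWA (subset_closure hy'W)
    set C' := connectedComponentIn A y' with hC'def
    obtain ⟨w, hwcl, hwfrA⟩ := bb2 hA hAne hy'A
    have hwy : 4 * ρ ≤ dist y w :=
      le_trans h4ρd1 (Metric.infDist_le_dist_of_mem hwfrA)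
    have hwncl : w ∉ closure W := by
      intro hw
      have h1 : dist w y ≤ ρ := mem_closedBall.mp (hclW hw)
      rw [dist_comm] at h1
      linarith
    obtain ⟨z, hzcl, hzE⟩ := prec_frontier
      isPreconnected_connectedComponentIn.closure hWopen
      ⟨y', subset_closure (mem_connectedComponentIn hy'A), hy'W⟩
      ⟨w, hwcl, hwncl⟩
    have hzA : z ∈ A := hclWA (frontier_subset_closure hzE)
    have hzC' : z ∈ C' := by
      have hpre : IsPreconnected (C' ∪ {z}) := by
        apply isPreconnected_connectedComponentIn.subset_closure subset_union_left
        exact union_subset subset_closure (singleton_subset_iff.mpr hzcl)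
      have hsubA : C' ∪ {z} ⊆ A :=
        union_subset (connectedComponentIn_subset A y') (singleton_subset_iff.mpr hzA)
      have := hpre.subset_connectedComponentIn
        (mem_union_left _ (mem_connectedComponentIn hy'A)) hsubA
      exact this (mem_union_right _ rfl)
    have hzC : z ∉ C := by
      intro hzC
      apply hy'C
      have h1 : connectedComponentIn A y' = connectedComponentIn A z :=
        connectedComponentIn_eq hzC'
      have h2 : C = connectedComponentIn A z := connectedComponentIn_eq hzC
      rw [h2, ← h1]
      exact mem_connectedComponentIn hy'A
    refine mem_biUnion (⟨hzE, hzC⟩ : z ∈ E \ C) ?_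
    rw [← connectedComponentIn_eq hzC']
    exact mem_connectedComponentIn hy'A
  have hmem : y ∈ closure (W \ C) := by
    rw [_root_.mem_closure_iff]
    intro o ho hyo
    obtain ⟨p, hp, hpC⟩ : ∃ p ∈ o ∩ W, p ∉ C := by
      by_contra hall
      push_neg at hall
      exact hcon (o ∩ W) hall (ho.inter hWopen) ⟨hyo, hyW⟩
    exact ⟨p, hp.1, hp.2, hpC⟩
  have hclS : closure S = ⋃ z ∈ E \ C, closure (connectedComponentIn A z) :=
    Set.Finite.closure_biUnion (hWfr.subset diff_subset) _
  have hyS : y ∈ closure S := closure_mono hclaim hmem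
  rw [hclS, mem_iUnion₂] at hyS
  obtain ⟨z, ⟨hzE, hzC⟩, hycl⟩ := hyS
  have hzA : z ∈ A := hclWA (frontier_subset_closure hzE)
  have hpre : IsPreconnected (connectedComponentIn A z ∪ {y}) := by
    apply isPreconnected_connectedComponentIn.subset_closure subset_union_left
    exact union_subset subset_closure (singleton_subset_iff.mpr hycl)
  have hsubA : connectedComponentIn A z ∪ {y} ⊆ A :=
    union_subset (connectedComponentIn_subset A z) (singleton_subset_iff.mpr hyA)
  have hsub := hpre.subset_connectedComponentIn (mem_union_right _ rfl) hsubA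
  apply hzC
  rw [hCy]
  exact hsub (mem_union_left _ (mem_connectedComponentIn hzA))

end Helpers

/-- in a regular curve, a connected open set `U` with `n` boundary
points and diameter `> ε` contains a connected open set `V` with
`dist(V, ∂U) ≥ ε/(4n)` and `diam(V) ≥ ε/(4n)`. -/
theorem stmt9 {X : Type*} [MetricSpace X] [CompactSpace X] [ConnectedSpace X]
    [Nonempty X]
    (hreg : ∀ x : X, ∀ ε > (0 : ℝ), ∃ U : Set X,
      IsOpen U ∧ x ∈ U ∧ U ⊆ Metric.ball x ε ∧ (frontier U).Finite)
    (U : Set X) (hUopen : IsOpen U) (hUconn : IsConnected U)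
    (n : ℕ) (hn : 0 < n) (hbd : (frontier U).Finite ∧ (frontier U).ncard = n)
    (ε : ℝ) (hε : 0 < ε) (hdiam : Metric.diam U > ε) :
    ∃ V : Set X, IsOpen V ∧ V.Nonempty ∧ IsPreconnected V ∧ V ⊆ U ∧
      (∀ v ∈ V, ∀ w ∈ frontier U, dist v w ≥ ε / (4 * n)) ∧
      Metric.diam V ≥ ε / (4 * n) := by
  have hF := hbd.1
  have hncast : (0:ℝ) < (n:ℝ) := by exact_mod_cast hn
  set r : ℝ := ε / (4 * (n:ℝ)) with hrdef
  have hr : 0 < r := by positivity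
  have h4nr : 4 * (n:ℝ) * r = ε := by
    rw [hrdef]; field_simp
  have hFne : (frontier U).Nonempty := by
    rcases Set.eq_empty_or_nonempty (frontier U) with h | h
    · exfalso; rw [h, Set.ncard_empty] at hbd; omega
    · exact h
  -- two far-apart points of U
  obtain ⟨a, haU, b, hbU, hab⟩ : ∃ a ∈ U, ∃ b ∈ U, ε < dist a b := by
    by_contra hc
    push_neg at hc
    exact absurd (Metric.diam_le_of_forall_dist_le hε.le hc) (not_le.mpr hdiam)
  -- a good level t
  obtain ⟨t, ht0D, htgood⟩ : ∃ t, t ∈ Icc (0:ℝ) (dist a b) ∧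
      ∀ p ∈ frontier U, t ∉ Ioo (dist a p - 2*r) (dist a p + 2*r) := by
    by_contra hc
    push_neg at hc
    have hsub : Icc (0:ℝ) (dist a b) ⊆
        ⋃ p ∈ hF.toFinset, Ioo (dist a p - 2*r) (dist a p + 2*r) := by
      intro s hs
      obtain ⟨p, hp, hm⟩ := hc s hs
      exact mem_biUnion (hF.mem_toFinset.mpr hp) hm
    have h1 : MeasureTheory.volume (Icc (0:ℝ) (dist a b)) ≤
        ∑ p ∈ hF.toFinset, MeasureTheory.volume (Ioo (dist a p - 2*r) (dist a p + 2*r)) :=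
      (MeasureTheory.measure_mono hsub).trans (MeasureTheory.measure_biUnion_finset_le _ _)
    have h2 : ∀ p ∈ hF.toFinset,
        MeasureTheory.volume (Ioo (dist a p - 2*r) (dist a p + 2*r))
          = ENNReal.ofReal (4*r) := by
      intro p _
      rw [Real.volume_Ioo]
      ring_nf
    rw [Finset.sum_congr rfl h2, Finset.sum_const, Real.volume_Icc] at h1
    have hcard : hF.toFinset.card = n := by
      rw [← Set.ncard_eq_toFinset_card _ hF]; exact hbd.2
    rw [hcard, nsmul_eq_mul, ← ENNReal.ofReal_natCast,
      ← ENNReal.ofReal_mul (by positivity)] at h1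
    have h3 : dist a b - 0 ≤ (n:ℝ) * (4*r) :=
      (ENNReal.ofReal_le_ofReal_iff (by positivity)).mp h1
    have : (n:ℝ) * (4*r) = ε := by rw [← h4nr]; ring
    rw [this] at h3
    linarith
  -- IVT: a point x of U at level t
  obtain ⟨x, hxU, hxt⟩ : ∃ x ∈ U, dist a x = t := by
    have hg : ContinuousOn (fun z => dist a z) U :=
      (continuous_const.dist continuous_id).continuousOn
    have hpre : IsPreconnected ((fun z => dist a z) '' U) :=
      hUconn.isPreconnected.image _ hg
    have himg : Icc 0 (dist a b) ⊆ (fun z => dist a z) '' U :=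
      hpre.Icc_subset ⟨a, haU, dist_self a⟩ ⟨b, hbU, rfl⟩
    obtain ⟨x, hxU, hxt⟩ := himg ht0D
    exact ⟨x, hxU, hxt⟩
  have hx2r : ∀ p ∈ frontier U, 2*r ≤ dist x p := by
    intro p hp
    have hni := htgood p hp
    rw [mem_Ioo, not_and_or, not_lt, not_lt] at hni
    have habs : |dist a p - dist a x| ≤ dist p x := by
      have := abs_dist_sub_le p x a
      rw [dist_comm p a, dist_comm x a] at this
      exact this
    rw [hxt] at habs
    rw [dist_comm]
    rcases hni with h1 | h1
    · calc 2*r ≤ dist a p - t := by linarith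
        _ ≤ |dist a p - t| := le_abs_self _
        _ ≤ dist p x := habs
    · calc 2*r ≤ t - dist a p := by linarith
        _ ≤ |dist a p - t| := by rw [abs_sub_comm]; exact le_abs_self _
        _ ≤ dist p x := habs
  -- the far-from-boundary open set
  set V₀ : Set X := U ∩ ⋂ p ∈ frontier U, {z | r < dist z p} with hV₀def
  have hV₀open : IsOpen V₀ :=
    hUopen.inter (hF.isOpen_biInter fun p _ =>
      isOpen_lt continuous_const (continuous_id.dist continuous_const))
  have hxV₀ : x ∈ V₀ := by
    refine ⟨hxU, mem_biInter fun p hp => ?_⟩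
    have := hx2r p hp
    simp only [mem_setOf_eq]
    linarith
  have hV₀U : V₀ ⊆ U := inter_subset_left
  have hV₀ne : V₀ ≠ univ := by
    obtain ⟨p, hp⟩ := hFne
    intro hu
    have hpV₀ : p ∈ V₀ := hu ▸ mem_univ p
    exact (hUopen.frontier_eq ▸ hp).2 (hV₀U hpV₀)
  set V := connectedComponentIn V₀ x with hVdef
  have hVV₀ : V ⊆ V₀ := connectedComponentIn_subset V₀ x
  have hxV : x ∈ V := mem_connectedComponentIn hxV₀
  refine ⟨V, lc_open hreg hV₀open hV₀ne x, ⟨x, hxV⟩, isPreconnected_connectedComponentIn,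
    hVV₀.trans hV₀U, ?_, ?_⟩
  · intro v hv w hw
    have hvV₀ := hVV₀ hv
    have := (mem_iInter₂.mp hvV₀.2) w hw
    simp only [mem_setOf_eq] at this
    rw [ge_iff_le]
    exact this.le
  · -- diameter bound
    obtain ⟨w, hwcl, hwfr⟩ := bb2 hV₀open hV₀ne hxV₀
    have hwclV₀ : w ∈ closure V₀ := frontier_subset_closure hwfr
    have hwnV₀ : w ∉ V₀ := (hV₀open.frontier_eq ▸ hwfr).2
    have hwge : ∀ p ∈ frontier U, r ≤ dist w p := by
      have hclosed : IsClosed (⋂ p ∈ frontier U, {z : X | r ≤ dist z p}) :=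
        isClosed_biInter fun p _ => isClosed_le continuous_const
          (continuous_id.dist continuous_const)
      have hsub : V₀ ⊆ ⋂ p ∈ frontier U, {z : X | r ≤ dist z p} := by
        intro z hz
        refine mem_biInter fun p hp => ?_
        have h1 : r < dist z p := mem_iInter₂.mp hz.2 p hp
        exact le_of_lt h1
      have := closure_minimal hsub hclosed hwclV₀
      intro p hp
      exact (mem_iInter₂.mp this) p hp
    have hwU : w ∈ U := by
      by_contra hwnU
      have hwfrU : w ∈ frontier U := by
        rw [hUopen.frontier_eq]
        refine ⟨?_, hwnU⟩
        exact closure_mono hV₀U hwclV₀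
      have := hwge w hwfrU
      rw [dist_self] at this
      linarith
    obtain ⟨p', hp', hwp'⟩ : ∃ p' ∈ frontier U, dist w p' ≤ r := by
      by_contra hcc
      push_neg at hcc
      exact hwnV₀ ⟨hwU, mem_biInter fun p hp => hcc p hp⟩
    have hxw : r ≤ dist x w := by
      have h5 : 2*r ≤ dist x p' := hx2r p' hp'
      have h4 := dist_triangle x w p'
      linarith
    have hxclV : x ∈ closure V := subset_closure hxV
    have hdistdiam : dist x w ≤ Metric.diam (closure V) :=
      Metric.dist_le_diam_of_mem isBounded_of_compactSpace hxclV hwcl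
    rw [Metric.diam_closure] at hdistdiam
    rw [ge_iff_le]
    linarith
end

section
/- Let X be a regular curve containing a point of finite order, and let a group G act on X by homeomorphisms, minimally and sensitively. Then every point of X has a G-contractible neighborhood: an open neighborhood V such that there exists a sequence (g_n) in G with diam(g_n V) → 0. -/
open Filter
open Set Metric

lemma regular_locallyConnected {X : Type*} [MetricSpace X] [CompactSpace X] [ConnectedSpace X]
    (hreg : ∀ x : X, ∀ ε > (0 : ℝ), ∃ U : Set X,
      IsOpen U ∧ x ∈ U ∧ U ⊆ Metric.ball x ε ∧ (frontier U).Finite) :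
    LocallyConnectedSpace X := by
  rw [locallyConnectedSpace_iff_connected_subsets]
  intro x N hN
  obtain ⟨ε, hε, hball⟩ := Metric.mem_nhds_iff.mp hN
  obtain ⟨U, hUo, hxU, hUb, hUfin⟩ := hreg x (ε / 2) (by positivity)
  set K := closure U with hKdef
  have hKN : K ⊆ N := by
    refine subset_trans ?_ hball
    calc K ⊆ closure (Metric.ball x (ε / 2)) := closure_mono hUb
      _ ⊆ Metric.closedBall x (ε / 2) := Metric.closure_ball_subset_closedBall
      _ ⊆ Metric.ball x ε := Metric.closedBall_subset_ball (by linarith)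
  have hKc : IsCompact K := isClosed_closure.isCompact
  haveI : CompactSpace K := isCompact_iff_compactSpace.mp hKc
  -- points of K off the frontier are in U
  have hKU : ∀ y : K, (y : X) ∉ frontier U → (y : X) ∈ U := by
    intro y hy
    have : (y : X) ∈ closure U := y.2
    by_contra hyU
    exact hy ⟨this, by rwa [hUo.interior_eq]⟩
  have hxK : x ∈ K := subset_closure hxU
  -- the finite frontier, living in K
  have hFk : {f : K | (f : X) ∈ frontier U}.Finite := by
    have : (Subtype.val ⁻¹' (frontier U) : Set K).Finite :=
      hUfin.preimage (Subtype.val_injective.injOn)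
    exact this
  by_cases hcase : ∃ y : K, ∀ f : K, (f : X) ∈ frontier U → f ∉ connectedComponent y
  · -- collapse case : X ⊆ U, take V = univ
    obtain ⟨y, hy⟩ := hcase
    have hZ : ∀ f : K, ∃ Z : Set K, IsClopen Z ∧ y ∈ Z ∧ ((f : X) ∈ frontier U → f ∉ Z) := by
      intro f
      by_cases hf : (f : X) ∈ frontier U
      · have hfc := hy f hf
        rw [connectedComponent_eq_iInter_isClopen] at hfc
        rw [Set.mem_iInter] at hfc
        push_neg at hfc
        obtain ⟨⟨Z, hZcl, hyZ⟩, hfZ⟩ := hfc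
        exact ⟨Z, hZcl, hyZ, fun _ => hfZ⟩
      · exact ⟨Set.univ, isClopen_univ, trivial, fun h => absurd h hf⟩
    choose Z hZclopen hyZ hZf using hZ
    set A : Set K := ⋂ f ∈ {f : K | (f : X) ∈ frontier U}, Z f with hAdef
    have hAclopen : IsClopen A := hFk.isClopen_biInter (fun f _ => hZclopen f)
    have hyA : y ∈ A := Set.mem_iInter₂.mpr fun f _ => hyZ f
    have hAU : Subtype.val '' A ⊆ U := by
      rintro _ ⟨a, haA, rfl⟩
      refine hKU a ?_
      intro hfr
      exact hZf a hfr (Set.mem_iInter₂.mp haA a hfr)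
    -- val '' A is clopen in X
    obtain ⟨O, hOo, hOeq⟩ := isOpen_induced_iff.mp hAclopen.2
    have himg : Subtype.val '' A = O ∩ U := by
      apply Set.Subset.antisymm
      · rintro _ ⟨a, haA, rfl⟩
        refine ⟨?_, hAU ⟨a, haA, rfl⟩⟩
        have : a ∈ Subtype.val ⁻¹' O := hOeq ▸ haA
        exact this
      · rintro z ⟨hzO, hzU⟩
        refine ⟨⟨z, subset_closure hzU⟩, ?_, rfl⟩
        rw [← hOeq]; exact hzO
    have hopen : IsOpen (Subtype.val '' A) := himg ▸ hOo.inter hUo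
    have hclosed : IsClosed (Subtype.val '' A) :=
      ((hAclopen.1.isCompact).image continuous_subtype_val).isClosed
    have huniv : Subtype.val '' A = Set.univ :=
      IsClopen.eq_univ ⟨hclosed, hopen⟩ ⟨y, y, hyA, rfl⟩
    have hXU : (Set.univ : Set X) ⊆ N := by
      rw [← huniv]
      exact fun z hz => hKN (by rcases hz with ⟨a, _, rfl⟩; exact a.2)
    exact ⟨Set.univ, Filter.univ_mem, isPreconnected_univ, hXU⟩
  · push_neg at hcase
    set x' : K := ⟨x, hxK⟩ with hx'
    set C : Set K := connectedComponent x' with hCdef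
    -- C is the complement of the finitely many components of frontier points not in C
    set D : Set K := ⋃ f ∈ {f : K | (f : X) ∈ frontier U ∧ f ∉ C}, connectedComponent f with hDdef
    have hDclosed : IsClosed D := by
      refine Set.Finite.isClosed_biUnion ?_ (fun f _ => isClosed_connectedComponent)
      exact hFk.subset (fun f hf => hf.1)
    have hCD : C = Dᶜ := by
      apply Set.Subset.antisymm
      · intro z hz
        simp only [Set.mem_compl_iff, hDdef, Set.mem_iUnion] at *
        rintro ⟨f, ⟨hffr, hfC⟩, hzf⟩
        have h1 : connectedComponent f = connectedComponent z := connectedComponent_eq hzf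
        have h2 : C = connectedComponent z := connectedComponent_eq hz
        apply hfC
        have : f ∈ connectedComponent f := mem_connectedComponent
        rw [h1, ← h2] at this
        exact this
      · intro z hz
        obtain ⟨f, hffr, hfz⟩ := hcase z
        have h1 : connectedComponent z = connectedComponent f := connectedComponent_eq hfz
        by_cases hfC : f ∈ C
        · have h2 : C = connectedComponent f := connectedComponent_eq hfC
          have : z ∈ connectedComponent z := mem_connectedComponent
          rw [h1, ← h2] at this
          exact this
        · exfalso
          apply hz
          rw [hDdef]
          refine Set.mem_biUnion ⟨hffr, hfC⟩ ?_
          have : z ∈ connectedComponent z := mem_connectedComponent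
          rwa [h1] at this
    have hCopen : IsOpen C := hCD ▸ hDclosed.isOpen_compl
    obtain ⟨O, hOo, hOeq⟩ := isOpen_induced_iff.mp hCopen
    refine ⟨Subtype.val '' C, ?_, ?_, ?_⟩
    · rw [_root_.mem_nhds_iff]
      refine ⟨O ∩ U, ?_, hOo.inter hUo, ?_, ?_⟩
      · rintro z ⟨hzO, hzU⟩
        refine ⟨⟨z, subset_closure hzU⟩, ?_, rfl⟩
        rw [← hOeq]; exact hzO
      · have hx'O : x' ∈ Subtype.val ⁻¹' O := by
          rw [hOeq]; exact mem_connectedComponent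
        exact hx'O
      · exact hxU
    · exact isPreconnected_connectedComponent.image _ continuous_subtype_val.continuousOn
    · exact fun z hz => hKN (by rcases hz with ⟨a, _, rfl⟩; exact a.2)


lemma frontier_connectedComponentIn_subset' {X : Type*} [TopologicalSpace X]
    [LocallyConnectedSpace X] {U : Set X} (hU : IsOpen U) (x : X) :
    frontier (connectedComponentIn U x) ⊆ frontier U := by
  have hCo : IsOpen (connectedComponentIn U x) := hU.connectedComponentIn
  intro y hy
  rw [hCo.frontier_eq] at hy
  rw [hU.frontier_eq]
  obtain ⟨hyc, hyn⟩ := hy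
  refine ⟨closure_mono (connectedComponentIn_subset U x) hyc, ?_⟩
  intro hyU
  have h1 : IsOpen (connectedComponentIn U y) := hU.connectedComponentIn
  have h2 : y ∈ connectedComponentIn U y := mem_connectedComponentIn hyU
  obtain ⟨z, hz1, hz2⟩ := _root_.mem_closure_iff.mp hyc _ h1 h2
  have e1 := connectedComponentIn_eq (F := U) hz1
  have e2 := connectedComponentIn_eq (F := U) hz2
  apply hyn
  rw [e2, ← e1]
  exact h2

lemma icc_cover_bound {α : Type*} (F : Finset α) (m : α → ℝ) (ρ L : ℝ) (hρ : 0 ≤ ρ) (hL : 0 ≤ L)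
    (h : Set.Icc (0 : ℝ) L ⊆ ⋃ f ∈ F, Set.Ioo (m f - ρ) (m f + ρ)) :
    L ≤ F.card * (2 * ρ) := by
  have h1 : MeasureTheory.volume (Set.Icc (0 : ℝ) L) ≤
      MeasureTheory.volume (⋃ f ∈ F, Set.Ioo (m f - ρ) (m f + ρ)) :=
    MeasureTheory.measure_mono h
  have h2 : MeasureTheory.volume (⋃ f ∈ F, Set.Ioo (m f - ρ) (m f + ρ)) ≤
      ∑ f ∈ F, MeasureTheory.volume (Set.Ioo (m f - ρ) (m f + ρ)) :=
    MeasureTheory.measure_biUnion_finset_le _ _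
  have h3 : ∀ f ∈ F, MeasureTheory.volume (Set.Ioo (m f - ρ) (m f + ρ)) =
      ENNReal.ofReal (2 * ρ) := by
    intro f _
    rw [Real.volume_Ioo]
    ring_nf
  rw [Finset.sum_congr rfl h3] at h2
  rw [Real.volume_Icc] at h1
  have h4 : ENNReal.ofReal (L - 0) ≤ F.card * ENNReal.ofReal (2 * ρ) := by
    calc ENNReal.ofReal (L - 0) ≤ _ := le_trans h1 h2
      _ = F.card * ENNReal.ofReal (2 * ρ) := by rw [Finset.sum_const, nsmul_eq_mul]
  have h5 : ENNReal.ofReal ((F.card : ℝ) * (2 * ρ)) =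
      (F.card : ENNReal) * ENNReal.ofReal (2 * ρ) := by
    rw [ENNReal.ofReal_mul (by positivity : (0 : ℝ) ≤ (F.card : ℝ)), ENNReal.ofReal_natCast]
  rw [sub_zero, ← h5] at h4
  exact (ENNReal.ofReal_le_ofReal_iff (by positivity)).mp h4

lemma exists_far_point {X : Type*} [MetricSpace X] {W : Set X} (hW : IsPreconnected W)
    {F : Set X} (hF : F.Finite) {n : ℕ} (hcard : F.ncard ≤ n) {c : ℝ}
    {a b : X} (ha : a ∈ W) (hb : b ∈ W) (hab : c < dist a b) (hc : 0 < c) :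
    ∃ w ∈ W, ∀ f ∈ F, c / (2 * (n + 1)) ≤ dist w f := by
  by_contra hcon
  push_neg at hcon
  set ρ := c / (2 * ((n : ℝ) + 1)) with hρdef
  have hρ : 0 < ρ := by positivity
  have hIVT : Set.Icc (dist a a) (dist a b) ⊆ (fun y => dist a y) '' W :=
    hW.intermediate_value ha hb ((continuous_const.dist continuous_id).continuousOn)
  rw [dist_self] at hIVT
  have hsub : Set.Icc (0 : ℝ) (dist a b) ⊆
      ⋃ f ∈ hF.toFinset, Set.Ioo (dist a f - ρ) (dist a f + ρ) := by
    intro t ht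
    obtain ⟨y, hyW, hyt⟩ := hIVT ht
    obtain ⟨f, hfF, hyf⟩ := hcon y hyW
    refine Set.mem_biUnion (hF.mem_toFinset.mpr hfF) ?_
    have htri1 := dist_triangle a y f
    have htri2 := dist_triangle a f y
    have : dist f y = dist y f := dist_comm f y
    constructor <;> simp only [← hyt] <;> linarith
  have hbound := icc_cover_bound hF.toFinset (fun f => dist a f) ρ (dist a b) hρ.le
    dist_nonneg hsub
  have hcardeq : (hF.toFinset.card : ℝ) ≤ n := by
    have h6 : F.ncard = hF.toFinset.card := Set.ncard_eq_toFinset_card F hF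
    have h7 : hF.toFinset.card ≤ n := h6 ▸ hcard
    exact_mod_cast h7
  have : (hF.toFinset.card : ℝ) * (2 * ρ) ≤ n * (2 * ρ) := by
    apply mul_le_mul_of_nonneg_right hcardeq (by positivity)
  have hfin : (n : ℝ) * (2 * ρ) < c := by
    have hpos : (0 : ℝ) < 2 * ((n : ℝ) + 1) := by positivity
    have heq : (n : ℝ) * (2 * (c / (2 * ((n : ℝ) + 1)))) =
        ((n : ℝ) * 2 * c) / (2 * ((n : ℝ) + 1)) := by ring
    rw [hρdef, heq, div_lt_iff₀ hpos]
    nlinarith [hc]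
  linarith

/-- for a minimal and sensitive action of a group on a regular
curve with a point of finite order, every point has a G-contractible
neighborhood. -/
theorem stmt11 {X : Type*} [MetricSpace X] [CompactSpace X] [ConnectedSpace X]
    [Nonempty X] {G : Type*} [Group G] (φ : G → (X ≃ₜ X))
    (hφ : ∀ g h : G, ∀ x : X, φ (g * h) x = φ g (φ h x))
    (hreg : ∀ x : X, ∀ ε > (0 : ℝ), ∃ U : Set X,
      IsOpen U ∧ x ∈ U ∧ U ⊆ Metric.ball x ε ∧ (frontier U).Finite)
    (hfinord : ∃ (x : X) (n : ℕ), ∀ ε > (0 : ℝ), ∃ U : Set X,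
      IsOpen U ∧ x ∈ U ∧ U ⊆ Metric.ball x ε ∧ (frontier U).Finite ∧
      (frontier U).ncard ≤ n)
    (hmin : ∀ x : X, Dense (Set.range fun g : G => φ g x))
    (hsens : ∃ c > (0 : ℝ), ∀ U : Set X, IsOpen U → U.Nonempty →
      ∃ g : G, Metric.diam (φ g '' U) > c) :
    ∀ x : X, ∃ V : Set X, IsOpen V ∧ x ∈ V ∧
      ∃ g : ℕ → G, Tendsto (fun n => Metric.diam (φ (g n) '' V)) atTop (nhds 0) := by
  classical
  obtain ⟨c, hc, hs⟩ := hsens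
  obtain ⟨x₀, n, hx₀⟩ := hfinord
  haveI hLC : LocallyConnectedSpace X := regular_locallyConnected hreg
  -- basic facts about the action
  have hone : ∀ y : X, φ 1 y = y := by
    intro y
    have h1 : φ 1 (φ 1 y) = φ 1 y := by rw [← hφ 1 1 y, one_mul]
    exact (φ 1).injective h1
  have hcomp : ∀ (g h : G) (S : Set X), φ (g * h) '' S = φ g '' (φ h '' S) := by
    intro g h S
    rw [Set.image_image]
    exact Set.image_congr fun y _ => hφ g h y
  have hcancel : ∀ (g : G) (S : Set X), φ g⁻¹ '' (φ g '' S) = S := by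
    intro g S
    rw [← hcomp, inv_mul_cancel]
    calc φ (1 : G) '' S = id '' S := Set.image_congr fun y _ => hone y
      _ = S := Set.image_id S
  -- small connected sets around x₀ with small frontier
  have hUk : ∀ k : ℕ, ∃ U : Set X, IsOpen U ∧ x₀ ∈ U ∧
      U ⊆ Metric.ball x₀ (1 / ((k : ℝ) + 1)) ∧ (frontier U).Finite ∧
      (frontier U).ncard ≤ n := fun k => hx₀ (1 / ((k : ℝ) + 1)) (by positivity)
  choose U hUo hUx hUb hUf hUn using hUk
  set Cs : ℕ → Set X := fun k => connectedComponentIn (U k) x₀ with hCs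
  have hCo : ∀ k, IsOpen (Cs k) := fun k => (hUo k).connectedComponentIn
  have hCx : ∀ k, x₀ ∈ Cs k := fun k => mem_connectedComponentIn (hUx k)
  have hCconn : ∀ k, IsPreconnected (Cs k) := fun k => isPreconnected_connectedComponentIn
  have hCfr : ∀ k, frontier (Cs k) ⊆ frontier (U k) :=
    fun k => frontier_connectedComponentIn_subset' (hUo k) x₀
  have hCsub : ∀ k, Cs k ⊆ Metric.ball x₀ (1 / ((k : ℝ) + 1)) :=
    fun k => (connectedComponentIn_subset _ _).trans (hUb k)
  -- sensitivity applied to each Cs k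
  choose g hgd using fun k => hs (Cs k) (hCo k) ⟨x₀, hCx k⟩
  set W : ℕ → Set X := fun k => φ (g k) '' Cs k with hWdef
  have hWo : ∀ k, IsOpen (W k) := fun k => (φ (g k)).isOpen_image.mpr (hCo k)
  have hWconn : ∀ k, IsPreconnected (W k) :=
    fun k => (hCconn k).image _ (φ (g k)).continuous.continuousOn
  have hWfr : ∀ k, frontier (W k) = φ (g k) '' frontier (Cs k) :=
    fun k => ((φ (g k)).image_frontier _).symm
  have hWfrfin : ∀ k, (frontier (W k)).Finite := by
    intro k
    rw [hWfr k]
    exact ((hUf k).subset (hCfr k)).image _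
  have hWfrcard : ∀ k, (frontier (W k)).ncard ≤ n := by
    intro k
    rw [hWfr k, Set.ncard_image_of_injective _ (φ (g k)).injective]
    exact le_trans (Set.ncard_le_ncard (hCfr k) (hUf k)) (hUn k)
  set ρ : ℝ := c / (2 * ((n : ℝ) + 1)) with hρdef
  have hρ : 0 < ρ := by positivity
  -- points of W k far from the frontier
  have hwk : ∀ k, ∃ w ∈ W k, ∀ f ∈ frontier (W k), ρ ≤ dist w f := by
    intro k
    obtain ⟨a, ha, b, hb, hab⟩ : ∃ a ∈ W k, ∃ b ∈ W k, c < dist a b := by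
      by_contra hcontra
      push_neg at hcontra
      have hble : Metric.diam (W k) ≤ c :=
        Metric.diam_le_of_forall_dist_le hc.le fun a ha b hb => hcontra a ha b hb
      exact absurd (hgd k) (not_lt.mpr hble)
    exact exists_far_point (hWconn k) (hWfrfin k) (hWfrcard k) ha hb hab hc
  choose w hwW hwfar using hwk
  obtain ⟨wl, -, ψ, hψmono, hψconv⟩ := isCompact_univ.tendsto_subseq fun k => Set.mem_univ (w k)
  -- the connected neighborhood V of wl
  set V : Set X := connectedComponentIn (Metric.ball wl (ρ / 4)) wl with hVdef
  have hVo : IsOpen V := Metric.isOpen_ball.connectedComponentIn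
  have hVwl : wl ∈ V := mem_connectedComponentIn (Metric.mem_ball_self (by positivity))
  have hVconn : IsPreconnected V := isPreconnected_connectedComponentIn
  have hVball : V ⊆ Metric.ball wl (ρ / 4) := connectedComponentIn_subset _ _
  obtain ⟨r, hr, hrV⟩ := Metric.isOpen_iff.mp hVo wl hVwl
  -- key : V is contained in W (ψ j) for good j
  have key : ∀ j, dist (w (ψ j)) wl < min r (ρ / 4) → V ⊆ W (ψ j) := by
    intro j hj
    have hWj := hWo (ψ j)
    have hdisj : ∀ v ∈ V, v ∉ frontier (W (ψ j)) := by
      intro v hvV hvfr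
      have h1 : ρ ≤ dist (w (ψ j)) v := hwfar _ v hvfr
      have h2 : dist wl v < ρ / 4 := by
        have := hVball hvV
        rwa [Metric.mem_ball, dist_comm] at this
      have h3 : dist (w (ψ j)) wl < ρ / 4 := lt_of_lt_of_le hj (min_le_right _ _)
      have h4 := dist_triangle (w (ψ j)) wl v
      linarith
    have hsub : V ⊆ W (ψ j) ∪ (closure (W (ψ j)))ᶜ := by
      intro v hv
      by_cases hcl : v ∈ closure (W (ψ j))
      · by_cases hW : v ∈ W (ψ j)
        · exact Or.inl hW
        · exact absurd (by rw [hWj.frontier_eq]; exact ⟨hcl, hW⟩) (hdisj v hv)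
      · exact Or.inr hcl
    have hdisjoint : Disjoint (W (ψ j)) (closure (W (ψ j)))ᶜ :=
      Set.disjoint_left.mpr fun a ha hco => hco (subset_closure ha)
    have hmem : (V ∩ W (ψ j)).Nonempty := by
      refine ⟨w (ψ j), ?_, hwW (ψ j)⟩
      apply hrV
      rw [Metric.mem_ball]
      exact lt_of_lt_of_le hj (min_le_left _ _)
    exact hVconn.subset_left_of_subset_union hWj isClosed_closure.isOpen_compl
      hdisjoint hsub hmem
  -- contraction of V
  have hcontract : ∀ j, dist (w (ψ j)) wl < min r (ρ / 4) →
      φ (g (ψ j))⁻¹ '' V ⊆ Metric.ball x₀ (1 / ((ψ j : ℝ) + 1)) := by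
    intro j hj
    have h1 : φ (g (ψ j))⁻¹ '' V ⊆ φ (g (ψ j))⁻¹ '' W (ψ j) :=
      Set.image_mono (key j hj)
    rw [show W (ψ j) = φ (g (ψ j)) '' Cs (ψ j) from rfl, hcancel] at h1
    exact h1.trans (hCsub (ψ j))
  have hconv' := Metric.tendsto_atTop.mp hψconv
  obtain ⟨j₀, hj₀⟩ := hconv' (min r (ρ / 4)) (lt_min hr (by positivity))
  -- conclusion for an arbitrary point x
  intro x
  obtain ⟨y, hys, hyV⟩ := (hmin x).exists_mem_open hVo ⟨wl, hVwl⟩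
  obtain ⟨γ, rfl⟩ := hys
  refine ⟨⇑(φ γ) ⁻¹' V, hVo.preimage (φ γ).continuous, hyV, ?_⟩
  refine ⟨fun m => (g (ψ (j₀ + m)))⁻¹ * γ, ?_⟩
  have himg : ∀ m : ℕ, φ ((g (ψ (j₀ + m)))⁻¹ * γ) '' (⇑(φ γ) ⁻¹' V) =
      φ (g (ψ (j₀ + m)))⁻¹ '' V := by
    intro m
    rw [hcomp, Set.image_preimage_eq V (φ γ).surjective]
  have hbound : ∀ m : ℕ, Metric.diam (φ ((g (ψ (j₀ + m)))⁻¹ * γ) '' (⇑(φ γ) ⁻¹' V)) ≤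
      2 * (1 / ((m : ℝ) + 1)) := by
    intro m
    rw [himg m]
    have hd : dist (w (ψ (j₀ + m))) wl < min r (ρ / 4) := hj₀ (j₀ + m) (Nat.le_add_right _ _)
    have h1 := hcontract (j₀ + m) hd
    have h2 : Metric.diam (φ (g (ψ (j₀ + m)))⁻¹ '' V) ≤ 2 * (1 / ((ψ (j₀ + m) : ℝ) + 1)) := by
      calc Metric.diam (φ (g (ψ (j₀ + m)))⁻¹ '' V)
          ≤ Metric.diam (Metric.ball x₀ (1 / ((ψ (j₀ + m) : ℝ) + 1))) :=
            Metric.diam_mono h1 Metric.isBounded_ball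
        _ ≤ 2 * (1 / ((ψ (j₀ + m) : ℝ) + 1)) := Metric.diam_ball (by positivity)
    refine h2.trans ?_
    have hle : (m : ℝ) + 1 ≤ (ψ (j₀ + m) : ℝ) + 1 := by
      have : m ≤ ψ (j₀ + m) := le_trans (Nat.le_add_left m j₀) hψmono.le_apply
      exact_mod_cast Nat.succ_le_succ this
    have := one_div_le_one_div_of_le (by positivity : (0 : ℝ) < (m : ℝ) + 1) hle
    linarith
  refine squeeze_zero (fun m => Metric.diam_nonneg) hbound ?_
  have := (tendsto_one_div_add_atTop_nhds_zero_nat : Tendsto (fun n : ℕ => 1 / ((n : ℝ) + 1)) atTop (nhds 0)).const_mul 2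
  simpa using this
end

section
/- Let a countable group G act by homeomorphisms on a compact metric space X, and suppose x_1, ..., x_n ∈ X. Then there exist points y_1, ..., y_k with 1 ≤ k ≤ n and a sequence (g_i) in G such that g_i{x_1,...,x_n} → {y_1,...,y_k} in the Hausdorff metric and y_p, y_q are not proximal for any p ≠ q. -/
/-!
Minimise the cardinality over the Hausdorff closure of the orbit of `{x₁, …, xₙ}` in the space of
nonempty compact sets; a minimiser `L` has at most `n` points. If two points of `L` were proximal
along `(hₘ)`, a subsequence of the translates `hₘ L` converges pointwise, hence in the Hausdorff
metric, to a set in which these two points have merged. That limit lies again in the orbit closure,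
which is closed and `G`-invariant, and has fewer points than `L`.
-/

open Filter Metric

open Function Set Topology TopologicalSpace

section FiniteRange

variable {X ι : Type*}

def finiteRange [TopologicalSpace X] [Finite ι] [Nonempty ι] (u : ι → X) : NonemptyCompacts X :=
  ⟨⟨range u, (finite_range u).isCompact⟩, range_nonempty u⟩

@[simp]
lemma coe_finiteRange [TopologicalSpace X] [Finite ι] [Nonempty ι] (u : ι → X) :
    (finiteRange u : Set X) = range u :=
  rfl

lemma hausdorffDist_range_le_dist [PseudoMetricSpace X] [Fintype ι] (u v : ι → X) :
    hausdorffDist (range u) (range v) ≤ dist u v := by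
  apply hausdorffDist_le_of_mem_dist dist_nonneg
  · rintro _ ⟨i, rfl⟩
    exact ⟨v i, mem_range_self i, dist_le_pi_dist u v i⟩
  · rintro _ ⟨i, rfl⟩
    exact ⟨u i, mem_range_self i, dist_comm (v i) (u i) ▸ dist_le_pi_dist u v i⟩

lemma lipschitzWith_finiteRange [MetricSpace X] [Fintype ι] [Nonempty ι] :
    LipschitzWith 1 (finiteRange : (ι → X) → NonemptyCompacts X) :=
  LipschitzWith.of_dist_le_mul fun u v => by
    rw [NNReal.coe_one, one_mul, NonemptyCompacts.dist_eq]
    exact hausdorffDist_range_le_dist u v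

lemma encard_range_lt_of_apply_eq [Finite ι] {z : ι → X} {i j : ι} (hij : i ≠ j)
    (h : z i = z j) : (range z).encard < ENat.card ι := by
  rw [← image_univ, ← encard_univ]
  refine (encard_image_le z univ).lt_of_ne fun he => hij ?_
  exact (toFinite univ).injOn_of_encard_image_eq he (mem_univ i) (mem_univ j) h

end FiniteRange

section OrbitClosure

variable {X G : Type*} [MetricSpace X] {φ : G → X ≃ₜ X}

def Proximal (φ : G → X ≃ₜ X) (a b : X) : Prop :=
  ∃ h : ℕ → G, Tendsto (fun m => dist (φ (h m) a) (φ (h m) b)) atTop (𝓝 0)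

def orbitClosure (φ : G → X ≃ₜ X) (K : NonemptyCompacts X) : Set (NonemptyCompacts X) :=
  closure (range fun g => K.map (φ g) (φ g).continuous)

lemma exists_tendsto_hausdorffDist_of_mem_orbitClosure {K L : NonemptyCompacts X}
    (hL : L ∈ orbitClosure φ K) :
    ∃ g : ℕ → G, Tendsto (fun i => hausdorffDist (φ (g i) '' K) L) atTop (𝓝 0) := by
  obtain ⟨u, hu, hlim⟩ := mem_closure_iff_seq_limit.1 hL
  choose g hg using hu
  refine ⟨g, ?_⟩
  simpa [← hg, NonemptyCompacts.dist_eq] using tendsto_iff_dist_tendsto_zero.1 hlim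

variable [Group G]

lemma apply_one_of_map_mul (hφ : ∀ g h : G, ∀ x : X, φ (g * h) x = φ g (φ h x)) (x : X) :
    φ 1 x = x :=
  (φ 1).injective (by rw [← hφ, one_mul])

lemma self_mem_orbitClosure (hφ : ∀ g h : G, ∀ x : X, φ (g * h) x = φ g (φ h x))
    (K : NonemptyCompacts X) : K ∈ orbitClosure φ K :=
  subset_closure ⟨1, NonemptyCompacts.ext <| by simp [apply_one_of_map_mul hφ]⟩

lemma map_mem_orbitClosure (hφ : ∀ g h : G, ∀ x : X, φ (g * h) x = φ g (φ h x))
    {K L : NonemptyCompacts X} (hL : L ∈ orbitClosure φ K) (h : G) :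
    L.map (φ h) (φ h).continuous ∈ orbitClosure φ K :=
  map_mem_closure (φ h).continuous.nonemptyCompacts_map hL <| by
    rintro _ ⟨g, rfl⟩
    exact ⟨h * g, NonemptyCompacts.ext <| by simp [image_image, hφ]⟩

lemma exists_encard_lt_of_proximal [CompactSpace X]
    (hφ : ∀ g h : G, ∀ x : X, φ (g * h) x = φ g (φ h x))
    {K L : NonemptyCompacts X} (hL : L ∈ orbitClosure φ K) (hfin : (L : Set X).Finite)
    {a b : X} (ha : a ∈ L) (hb : b ∈ L) (hab : a ≠ b) (hprox : Proximal φ a b) :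
    ∃ L' ∈ orbitClosure φ K, (L' : Set X).encard < (L : Set X).encard := by
  obtain ⟨h, hh⟩ := hprox
  have : Fintype L := hfin.fintype
  have : Nonempty L := ⟨⟨a, ha⟩⟩
  obtain ⟨z, -, ψ, hψ, hz⟩ := isCompact_univ.tendsto_subseq
    (x := fun m (c : L) => φ (h m) c) fun _ => mem_univ _
  have hzab : z ⟨a, ha⟩ = z ⟨b, hb⟩ :=
    dist_eq_zero.1 <| tendsto_nhds_unique
      ((tendsto_pi_nhds.1 hz _).dist (tendsto_pi_nhds.1 hz _)) (hh.comp hψ.tendsto_atTop)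
  have hmem : ∀ m, finiteRange (fun c : L => φ (h m) c) ∈ orbitClosure φ K := fun m => by
    convert map_mem_orbitClosure hφ hL (h m) using 1
    exact NonemptyCompacts.ext (image_eq_range _ _).symm
  refine ⟨finiteRange z, isClosed_closure.mem_of_tendsto
    ((lipschitzWith_finiteRange.continuous.tendsto z).comp hz)
    (Eventually.of_forall fun m => hmem (ψ m)), ?_⟩
  rw [← ENat.card_coe_set_eq]
  exact encard_range_lt_of_apply_eq (by simpa using hab) hzab

end OrbitClosure

theorem stmt13_general {X : Type*} [MetricSpace X] [CompactSpace X]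
    {G : Type*} [Group G] (φ : G → (X ≃ₜ X))
    (hφ : ∀ g h : G, ∀ x : X, φ (g * h) x = φ g (φ h x))
    (n : ℕ) (hn : 0 < n) (x : Fin n → X) :
    ∃ (k : ℕ), 1 ≤ k ∧ k ≤ n ∧ ∃ (y : Fin k → X) (g : ℕ → G),
      Function.Injective y ∧
      Tendsto (fun i => hausdorffDist (φ (g i) '' Set.range x) (Set.range y))
        atTop (nhds 0) ∧
      ∀ p q : Fin k, p ≠ q →
        ¬ ∃ h : ℕ → G,
          Tendsto (fun m => dist (φ (h m) (y p)) (φ (h m) (y q))) atTop (nhds 0) := by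
  have : Nonempty (Fin n) := ⟨⟨0, hn⟩⟩
  have hK := self_mem_orbitClosure hφ (finiteRange x)
  let size (L : NonemptyCompacts X) : ℕ∞ := (L : Set X).encard
  set L := argminOn size _ ⟨_, hK⟩
  have hL : L ∈ orbitClosure φ (finiteRange x) := argminOn_mem _ _ _
  have hLn : (L : Set X).encard ≤ n :=
    calc (L : Set X).encard ≤ (range x).encard := argminOn_le size _ hK
      _ ≤ n := by simpa using encard_image_le x univ
  have hfin : (L : Set X).Finite := finite_of_encard_le_coe hLn
  obtain ⟨k, y, hy, hyL⟩ := hfin.fin_param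
  have hkL : (k : ℕ∞) ≤ (L : Set X).encard := by simpa [hyL] using hy.encard_range
  obtain ⟨g, hg⟩ := exists_tendsto_hausdorffDist_of_mem_orbitClosure hL
  refine ⟨k, ?_, by exact_mod_cast hkL.trans hLn, y, g, hy, by simpa [← hyL] using hg, ?_⟩
  · obtain ⟨_, i, -⟩ := hyL ▸ L.nonempty
    exact i.pos
  · rintro p q hpq hprox
    obtain ⟨L', hL', hlt⟩ := exists_encard_lt_of_proximal hφ hL hfin
      (hyL.subset (mem_range_self p)) (hyL.subset (mem_range_self q)) (hy.ne hpq) hprox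
    exact not_lt_argminOn size _ hL' hlt

/-- from a finite set of points one can reach, along the action,
a finite set of pairwise non-proximal points (in the Hausdorff metric). -/
theorem stmt13 {X : Type*} [MetricSpace X] [CompactSpace X]
    {G : Type*} [Group G] [Countable G] (φ : G → (X ≃ₜ X))
    (hφ : ∀ g h : G, ∀ x : X, φ (g * h) x = φ g (φ h x))
    (n : ℕ) (hn : 0 < n) (x : Fin n → X) :
    ∃ (k : ℕ), 1 ≤ k ∧ k ≤ n ∧ ∃ (y : Fin k → X) (g : ℕ → G),
      Function.Injective y ∧
      Tendsto (fun i => hausdorffDist (φ (g i) '' Set.range x) (Set.range y))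
        atTop (nhds 0) ∧
      ∀ p q : Fin k, p ≠ q →
        ¬ ∃ h : ℕ → G,
          Tendsto (fun m => dist (φ (h m) (y p)) (φ (h m) (y q))) atTop (nhds 0) :=
  stmt13_general φ hφ n hn x
end

section
/- Let X be an infinite compact metric space and let a countable group G act on X minimally by homeomorphisms. Then for every countable subset C ⊆ X and every finite subset F ⊆ X, there exists a sequence (g_n) in G and a finite set K ⊆ X such that g_n F → K in the Hausdorff metric and K ∩ C = ∅. -/
open Filter Metric MulAction Set Topology
open scoped Pointwise

/-!
Let `G` act diagonally on the space `F → X` of `F`-tuples and let `a` be the tuple listing `F`.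
By Zorn's lemma the orbit closure of `a` contains a minimal set `T`. For a coordinate `i` and a
point `c`, the tuples in `T` whose `i`-th coordinate is `c` form a closed subset of `T` with
empty interior: otherwise finitely many translates of that interior cover `T`, so the `i`-th
coordinate takes only finitely many values on `T`, although it takes every value in an orbit,
and orbits are infinite because they are dense in the infinite space `X`. By Baire's theorem
some `t ∈ T` has no coordinate in the countable set `C`. As `t` lies in the orbit closure of
`a`, there are `g n` with `g n • a → t`, and then `φ (g n) '' F` tends to the set of
coordinates of `t` in the Hausdorff metric.
-/

namespace MulAction

section Monoid

variable (M : Type*) {Y : Type*} [Monoid M] [TopologicalSpace Y] [MulAction M Y]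

/-- Minimality among nonempty closed invariant sets, phrased as density of every orbit. -/
structure IsMinimalSet (T : Set Y) : Prop where
  nonempty : T.Nonempty
  isClosed : IsClosed T
  smul_subset : ∀ c : M, c • T ⊆ T
  subset_closure_orbit : ∀ y ∈ T, T ⊆ closure (orbit M y)

theorem infinite_orbit_of_isMinimal {X : Type*} [TopologicalSpace X] [T1Space X] [Infinite X]
    [MulAction M X] [IsMinimal M X] (x : X) : (orbit M x).Infinite := fun hfin ↦
  infinite_univ (by rw [← (dense_orbit M x).closure_eq, hfin.isClosed.closure_eq]; exact hfin)

variable {M}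

theorem _root_.IsClosed.exists_isMinimalSet_subset [ContinuousConstSMul M Y] [CompactSpace Y]
    {s : Set Y} (hs : IsClosed s) (hne : s.Nonempty) (hsmul : ∀ c : M, c • s ⊆ s) :
    ∃ T ⊆ s, IsMinimalSet M T := by
  let S : Set (Set Y) := {A | A.Nonempty ∧ IsClosed A ∧ ∀ c : M, c • A ⊆ A}
  have chain_bound : ∀ c ⊆ S, IsChain (· ⊆ ·) c → c.Nonempty → ∃ lb ∈ S, ∀ A ∈ c, lb ⊆ A := by
    intro c hcS hchain hcne
    have : Nonempty c := hcne.to_subtype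
    have hdir : DirectedOn (· ⊇ ·) c := fun A hA B hB ↦
      (hchain.total hA hB).elim (fun h ↦ ⟨A, hA, subset_rfl, h⟩) fun h ↦ ⟨B, hB, h, subset_rfl⟩
    refine ⟨⋂₀ c, ⟨?_, isClosed_sInter fun A hA ↦ (hcS hA).2.1, fun m ↦ ?_⟩,
      fun A ↦ sInter_subset_of_mem⟩
    · exact IsCompact.nonempty_sInter_of_directed_nonempty_isCompact_isClosed hdir
        (fun A hA ↦ (hcS hA).1) (fun A hA ↦ (hcS hA).2.1.isCompact) fun A hA ↦ (hcS hA).2.1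
    · exact subset_sInter fun A hA ↦
        (smul_set_mono (sInter_subset_of_mem hA)).trans ((hcS hA).2.2 m)
  obtain ⟨T, hTs, ⟨hTne, hTclosed, hTsmul⟩, hTmin⟩ :=
    zorn_superset_nonempty S chain_bound s ⟨hne, hs, hsmul⟩
  refine ⟨T, hTs, hTne, hTclosed, hTsmul, fun y hy ↦ ?_⟩
  have horbit : orbit M y ⊆ T := range_subset_iff.2 fun c ↦ hTsmul c (smul_mem_smul_set hy)
  exact hTmin ⟨(nonempty_orbit y).closure, isClosed_closure, fun c ↦ smul_closure_orbit_subset c y⟩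
    (closure_minimal horbit hTclosed)

end Monoid

namespace IsMinimalSet

variable {G Y X : Type*} [Group G] [TopologicalSpace Y] [MulAction G Y] [MulAction G X]
  {T : Set Y}

theorem exists_finite_cover_smul [ContinuousConstSMul G Y] [CompactSpace Y]
    (hT : IsMinimalSet G T) {U : Set Y} (hU : IsOpen U) (hUT : (U ∩ T).Nonempty) :
    ∃ I : Finset G, T ⊆ ⋃ g ∈ I, g • U := by
  obtain ⟨u, huU, huT⟩ := hUT
  refine hT.isClosed.isCompact.elim_finite_subcover (fun g : G ↦ g • U) (fun g ↦ hU.smul g)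
    fun y hy ↦ ?_
  obtain ⟨_, hgU, g, rfl⟩ := mem_closure_iff.1 (hT.subset_closure_orbit y hy huT) U hU huU
  exact mem_iUnion.2 ⟨g⁻¹, mem_smul_set_iff_inv_smul_mem.2 (by rwa [inv_inv])⟩

/-- The fibres of an equivariant map have empty interior in a minimal set. -/
theorem exists_mem_ne_of_isOpen [ContinuousConstSMul G Y] [CompactSpace Y]
    (hT : IsMinimalSet G T) {p : Y → X} (hp : ∀ (g : G) y, p (g • y) = g • p y)
    (hinf : ∀ x : X, (orbit G x).Infinite) {U : Set Y} (hU : IsOpen U)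
    (hUT : (U ∩ T).Nonempty) (c : X) : ∃ y ∈ U ∩ T, p y ≠ c := by
  by_contra! hfiber
  obtain ⟨I, hcover⟩ := hT.exists_finite_cover_smul hU hUT
  obtain ⟨y, hy⟩ := hT.nonempty
  refine hinf (p y) ((I.finite_toSet.image (· • c)).subset ?_)
  rintro _ ⟨h, rfl⟩
  have hhy : h • y ∈ T := hT.smul_subset h (smul_mem_smul_set hy)
  obtain ⟨g, hg, hgU⟩ := mem_iUnion₂.1 (hcover hhy)
  have hc : p (g⁻¹ • h • y) = c :=
    hfiber _ ⟨mem_smul_set_iff_inv_smul_mem.1 hgU, hT.smul_subset g⁻¹ (smul_mem_smul_set hhy)⟩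
  refine ⟨g, hg, ?_⟩
  calc g • c = g • p (g⁻¹ • h • y) := by rw [hc]
    _ = h • p y := by rw [hp, hp, smul_inv_smul]

theorem exists_forall_notMem [ContinuousConstSMul G Y] [CompactSpace Y] [T2Space Y]
    [TopologicalSpace X] [T1Space X] {ι : Type*} [Countable ι] (hT : IsMinimalSet G T)
    {p : ι → Y → X} (hpc : ∀ i, Continuous (p i)) (hp : ∀ i (g : G) y, p i (g • y) = g • p i y)
    (hinf : ∀ x : X, (orbit G x).Infinite) {C : Set X} (hC : C.Countable) :
    ∃ y ∈ T, ∀ i, p i y ∉ C := by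
  have : CompactSpace T := isCompact_iff_compactSpace.1 hT.isClosed.isCompact
  have : Countable C := hC.to_subtype
  have : Nonempty T := hT.nonempty.to_subtype
  let V : ι × C → Set T := fun ic ↦ (p ic.1 ∘ Subtype.val) ⁻¹' {(ic.2 : X)}ᶜ
  have hVopen : ∀ ic, IsOpen (V ic) := fun ic ↦
    isOpen_compl_singleton.preimage ((hpc ic.1).comp continuous_subtype_val)
  have hVdense : ∀ ic, Dense (V ic) := by
    rintro ⟨i, c⟩
    refine dense_iff_inter_open.2 fun W hW ⟨⟨y, hyT⟩, hyW⟩ ↦ ?_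
    obtain ⟨U, hU, rfl⟩ := isOpen_induced_iff.1 hW
    obtain ⟨z, ⟨hzU, hzT⟩, hz⟩ := hT.exists_mem_ne_of_isOpen (hp i) hinf hU ⟨y, hyW, hyT⟩ c
    exact ⟨⟨z, hzT⟩, hzU, hz⟩
  obtain ⟨⟨y, hyT⟩, hy⟩ := (dense_iInter_of_isOpen hVopen hVdense).nonempty
  exact ⟨y, hyT, fun i hi ↦ mem_iInter.1 hy ⟨i, ⟨_, hi⟩⟩ rfl⟩

end IsMinimalSet

end MulAction

namespace Metric

variable {ι X : Type*} [Fintype ι] [PseudoMetricSpace X]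

theorem hausdorffDist_range_le_dist (f g : ι → X) :
    hausdorffDist (range f) (range g) ≤ dist f g :=
  hausdorffDist_le_of_mem_dist dist_nonneg
    (forall_mem_range.2 fun i ↦ ⟨g i, mem_range_self i, dist_le_pi_dist f g i⟩)
    (forall_mem_range.2 fun i ↦
      ⟨f i, mem_range_self i, (dist_le_pi_dist g f i).trans_eq (dist_comm g f)⟩)

theorem tendsto_hausdorffDist_range {α : Type*} {l : Filter α} {f : α → ι → X} {g : ι → X}
    (h : Tendsto f l (𝓝 g)) : Tendsto (fun a ↦ hausdorffDist (range (f a)) (range g)) l (𝓝 0) :=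
  squeeze_zero (fun _ ↦ hausdorffDist_nonneg) (fun _ ↦ hausdorffDist_range_le_dist _ _)
    (tendsto_iff_dist_tendsto_zero.1 h)

end Metric

abbrev MulAction.ofHomeomorphFamily {G X : Type*} [Monoid G] [TopologicalSpace X]
    (φ : G → X ≃ₜ X) (hφ : ∀ g h : G, ∀ x : X, φ (g * h) x = φ g (φ h x)) : MulAction G X where
  smul g x := φ g x
  one_smul x := show φ 1 x = x from (φ 1).injective (by simpa only [one_mul] using (hφ 1 1 x).symm)
  mul_smul := hφ

theorem stmt14_general {X : Type*} [MetricSpace X] [CompactSpace X] [Infinite X]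
    {G : Type*} [Group G] (φ : G → (X ≃ₜ X))
    (hφ : ∀ g h : G, ∀ x : X, φ (g * h) x = φ g (φ h x))
    (hmin : ∀ x : X, Dense (Set.range fun g : G => φ g x))
    (C : Set X) (hC : C.Countable)
    (F : Set X) (hF : F.Finite) (hFne : F.Nonempty) :
    ∃ (g : ℕ → G) (K : Set X), K.Finite ∧ K.Nonempty ∧
      Tendsto (fun n => hausdorffDist (φ (g n) '' F) K) atTop (nhds 0) ∧
      K ∩ C = ∅ := by
  let _ : MulAction G X := MulAction.ofHomeomorphFamily φ hφ
  have : ContinuousConstSMul G X := ⟨fun g ↦ (φ g).continuous⟩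
  have : IsMinimal G X := ⟨hmin⟩
  let : Fintype F := hF.fintype
  have : Nonempty F := hFne.to_subtype
  let a : F → X := Subtype.val
  obtain ⟨T, hTa, hT⟩ := isClosed_closure.exists_isMinimalSet_subset
    (nonempty_orbit (M := G) a).closure fun c ↦ smul_closure_orbit_subset c a
  obtain ⟨t, htT, htC⟩ := hT.exists_forall_notMem (p := fun (i : F) (y : F → X) ↦ y i)
    continuous_apply (fun _ _ _ ↦ rfl) (infinite_orbit_of_isMinimal G) hC
  obtain ⟨y, hy, hyt⟩ := mem_closure_iff_seq_limit.1 (hTa htT)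
  choose g hg using hy
  refine ⟨g, range t, finite_range t, range_nonempty t, ?_, ?_⟩
  · have hφF : ∀ n, φ (g n) '' F = range (g n • a) := fun n ↦ image_eq_range _ _
    simp only [hφF]
    exact tendsto_hausdorffDist_range (by simpa only [hg] using hyt)
  · exact disjoint_iff_inter_eq_empty.1 (disjoint_left.2 fun _ ⟨i, hi⟩ ↦ hi ▸ htC i)

/-- Escaping Lemma: for a minimal action of a countable group on
an infinite compact metric space, any finite set can be moved (in the Hausdorff
metric) towards a finite limit set avoiding a given countable set. -/
theorem stmt14 {X : Type*} [MetricSpace X] [CompactSpace X] [Infinite X]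
    {G : Type*} [Group G] [Countable G] (φ : G → (X ≃ₜ X))
    (hφ : ∀ g h : G, ∀ x : X, φ (g * h) x = φ g (φ h x))
    (hmin : ∀ x : X, Dense (Set.range fun g : G => φ g x))
    (C : Set X) (hC : C.Countable)
    (F : Set X) (hF : F.Finite) (hFne : F.Nonempty) :
    ∃ (g : ℕ → G) (K : Set X), K.Finite ∧ K.Nonempty ∧
      Tendsto (fun n => hausdorffDist (φ (g n) '' F) K) atTop (nhds 0) ∧
      K ∩ C = ∅ :=
  stmt14_general φ hφ hmin C hC F hF hFne
end

section
/- Let X be an infinite compact metric space and let a countable group G act on X minimally by homeomorphisms. Then for any finite subsets A, B ⊆ X there exists g ∈ G with gA ∩ B = ∅. -/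
open scoped Pointwise


/-- for a minimal action of a countable group on an infinite
compact metric space, any finite set can be moved off any other finite set. -/
theorem stmt15 {X : Type*} [MetricSpace X] [CompactSpace X] [Infinite X]
    {G : Type*} [Group G] [Countable G] (φ : G → (X ≃ₜ X))
    (hφ : ∀ g h : G, ∀ x : X, φ (g * h) x = φ g (φ h x))
    (hmin : ∀ x : X, Dense (Set.range fun g : G => φ g x))
    (A B : Set X) (hA : A.Finite) (hB : B.Finite) :
    ∃ g : G, (φ g '' A) ∩ B = ∅ := by
  classical
  have hone : ∀ x : X, φ 1 x = x := by
    intro x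
    have h1 : φ (1 * 1) x = φ 1 (φ 1 x) := hφ 1 1 x
    rw [one_mul] at h1
    exact ((φ 1).injective h1.symm)
  have hinv : ∀ g : G, ∀ x : X, φ g⁻¹ (φ g x) = x := by
    intro g x
    rw [← hφ, inv_mul_cancel, hone]
  letI : SMul G X := ⟨fun g x => φ g x⟩
  letI : MulAction G X :=
    { one_smul := hone
      mul_smul := hφ }
  -- each orbit is infinite
  have horb : ∀ a : X, (Set.range fun g : G => φ g a).Infinite := by
    intro a
    intro hfin
    have hclosed : IsClosed (Set.range fun g : G => φ g a) := hfin.isClosed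
    have huniv : (Set.range fun g : G => φ g a) = Set.univ := by
      have := (hmin a).closure_eq
      rw [hclosed.closure_eq] at this
      exact this
    exact Set.infinite_univ (huniv ▸ hfin)
  by_contra hcon
  push_neg at hcon
  -- the bad pairs cover G by cosets of stabilizers
  set s : Finset (X × X) :=
    (hA.toFinset ×ˢ hB.toFinset).filter (fun p => ∃ g : G, φ g p.1 = p.2) with hs
  have hchoice : ∀ p ∈ s, ∃ g : G, φ g p.1 = p.2 := by
    intro p hp
    exact (Finset.mem_filter.mp hp).2
  choose! g₀ hg₀ using hchoice
  have hcovers : ⋃ p ∈ s, (g₀ p) • ((MulAction.stabilizer G p.1 : Subgroup G) : Set G)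
      = Set.univ := by
    ext g
    simp only [Set.mem_iUnion, Set.mem_univ, iff_true]
    obtain ⟨x, hx⟩ := hcon g
    obtain ⟨⟨a, ha, rfl⟩, hb⟩ := hx
    have hpmem : (a, φ g a) ∈ s := by
      rw [hs, Finset.mem_filter]
      exact ⟨Finset.mem_product.mpr ⟨hA.mem_toFinset.mpr ha, hB.mem_toFinset.mpr hb⟩, g, rfl⟩
    refine ⟨(a, φ g a), hpmem, ?_⟩
    rw [Set.mem_smul_set_iff_inv_smul_mem, SetLike.mem_coe, MulAction.mem_stabilizer_iff]
    show φ ((g₀ (a, φ g a))⁻¹ * g) a = a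
    rw [hφ]
    have h2 := hg₀ _ hpmem
    calc φ (g₀ (a, φ g a))⁻¹ (φ g a)
        = φ (g₀ (a, φ g a))⁻¹ (φ (g₀ (a, φ g a)) a) := by rw [h2]
      _ = a := hinv _ _
  obtain ⟨p, hp, hfi⟩ := Subgroup.exists_finiteIndex_of_leftCoset_cover hcovers
  -- finite index stabilizer gives finite orbit
  haveI := hfi
  haveI : Finite (G ⧸ MulAction.stabilizer G p.1) := Subgroup.finite_quotient_of_finiteIndex
  have : (MulAction.orbit G p.1).Finite := by
    haveI : Finite (MulAction.orbit G p.1) :=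
      Finite.of_equiv _ (MulAction.orbitEquivQuotientStabilizer G p.1).symm
    exact Set.toFinite _
  exact horb p.1 this
end

section
/- Let X be a regular curve and A a finite set of separating points of finite order (points a such that X \ {a} has only finitely many connected components). Then X \ A has only finitely many connected components. -/
/-!
A regular curve is locally connected: if `U` is a small open set with finite frontier around `x`,
then every component of the compact set `closure U` meets the finite set `frontier U` (a clopen
piece of `closure U` missing `frontier U` would be clopen in the whole continuum), so
`closure U` has finitely many components, each of them open in `closure U`.

Hence the components of `X \ A` are open, and since `X` is connected each of them accumulates at
some `a ∈ A`. Fix `a` and a neighbourhood `V` of `a` with finite frontier whose closure meets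
`A` only in `a`. A component accumulating at `a` either meets the finite set `frontier V`, or lies
in `V`; in the latter case its closure adds only the point `a`, so it is already a component of
`X \ {a}`, of which there are finitely many.
-/

open Set Topology

section CompactComponents

variable {K : Type*} [TopologicalSpace K]

theorem connectedComponent_inter_nonempty_of_forall_isClopen [CompactSpace K] [T2Space K]
    {F : Set K} (hF : F.Finite) (hF' : ∀ L : Set K, IsClopen L → L.Nonempty → (L ∩ F).Nonempty)
    (z : K) : (connectedComponent z ∩ F).Nonempty := by
  by_contra hz
  have hsep : ∀ f ∈ F, ∃ L : Set K, IsClopen L ∧ z ∈ L ∧ f ∉ L := by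
    intro f hf
    have hfz : f ∉ connectedComponent z := fun h => hz ⟨f, h, hf⟩
    simpa [connectedComponent_eq_iInter_isClopen] using hfz
  choose! L hLc hzL hfL using hsep
  obtain ⟨f, hfL', hfF⟩ :=
    hF' (⋂ f ∈ F, L f) (hF.isClopen_biInter hLc) ⟨z, mem_iInter₂.mpr hzL⟩
  exact hfL f hfF (mem_iInter₂.mp hfL' f hfF)

theorem finite_connectedComponents_of_forall_inter_nonempty {F : Set K} (hF : F.Finite)
    (h : ∀ z, (connectedComponent z ∩ F).Nonempty) : Finite (ConnectedComponents K) := by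
  refine finite_univ_iff.mp ((hF.image ConnectedComponents.mk).subset ?_)
  rintro c -
  obtain ⟨z, rfl⟩ := ConnectedComponents.surjective_coe c
  obtain ⟨f, hfz, hf⟩ := h z
  exact ⟨f, hf, ConnectedComponents.coe_eq_coe'.mpr hfz⟩

end CompactComponents

section FiniteFrontier

variable {X : Type*} [TopologicalSpace X]

theorem IsClopen.inter_preimage_frontier_nonempty [ConnectedSpace X] {U : Set X} (hU : IsOpen U)
    (hUX : U ≠ univ) {L : Set (closure U)} (hL : IsClopen L) (hLne : L.Nonempty) :
    (L ∩ Subtype.val ⁻¹' frontier U).Nonempty := by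
  by_contra hLF
  have hLU : ∀ w ∈ L, (w : X) ∈ U := fun w hw => by
    by_contra hwU
    exact hLF ⟨w, hw, hU.frontier_eq ▸ ⟨w.2, hwU⟩⟩
  obtain ⟨O, hO, hOL⟩ := isOpen_induced_iff.mp hL.isOpen
  have himage : Subtype.val '' L = O ∩ U := by
    ext y
    constructor
    · rintro ⟨w, hw, rfl⟩
      exact ⟨show w ∈ Subtype.val ⁻¹' O from hOL ▸ hw, hLU w hw⟩
    · rintro ⟨hyO, hyU⟩
      exact ⟨⟨y, subset_closure hyU⟩, hOL ▸ hyO, rfl⟩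
  have hclopen : IsClopen (Subtype.val '' L) :=
    ⟨isClosed_closure.isClosedMap_subtype_val L hL.isClosed, himage ▸ hO.inter hU⟩
  have huniv : O ∩ U = univ := by rw [← himage]; exact hclopen.eq_univ (hLne.image _)
  exact hUX (univ_subset_iff.mp (huniv.symm.subset.trans inter_subset_right))

theorem connectedComponentIn_closure_mem_nhds [CompactSpace X] [T2Space X] [ConnectedSpace X]
    {U : Set X} (hU : IsOpen U) (hUX : U ≠ univ) (hfr : (frontier U).Finite) {x : X}
    (hx : x ∈ U) : connectedComponentIn (closure U) x ∈ 𝓝 x := by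
  have : CompactSpace (closure U) := isCompact_iff_compactSpace.mp isClosed_closure.isCompact
  have hF : (Subtype.val ⁻¹' frontier U : Set (closure U)).Finite :=
    hfr.preimage Subtype.val_injective.injOn
  have : Finite (ConnectedComponents (closure U)) :=
    finite_connectedComponents_of_forall_inter_nonempty hF
      (connectedComponent_inter_nonempty_of_forall_isClopen hF
        fun _ hL hLne => hL.inter_preimage_frontier_nonempty hU hUX hLne)
  let x' : closure U := ⟨x, subset_closure hx⟩
  have hopen : IsOpen (connectedComponent x') :=
    ConnectedComponents.discreteTopology_iff.mp inferInstance x'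
  have hrange : range ((↑) : closure U → X) ∈ 𝓝 x := by
    rw [Subtype.range_coe]
    exact Filter.mem_of_superset (hU.mem_nhds hx) subset_closure
  rw [connectedComponentIn_eq_image x'.2, ← IsEmbedding.subtypeVal.map_nhds_of_mem x' hrange]
  exact Filter.image_mem_map (hopen.mem_nhds mem_connectedComponent)

theorem locallyConnectedSpace_of_finite_frontier [CompactSpace X] [T2Space X] [ConnectedSpace X]
    (h : ∀ x : X, ∀ N ∈ 𝓝 x, ∃ U, IsOpen U ∧ x ∈ U ∧ U ⊆ N ∧ (frontier U).Finite) :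
    LocallyConnectedSpace X := by
  rw [locallyConnectedSpace_iff_connected_subsets]
  intro x N hN
  obtain ⟨N', hN', hN'c, hN'N⟩ := exists_mem_nhds_isClosed_subset hN
  obtain ⟨U, hU, hxU, hUN', hfr⟩ := h x N' hN'
  by_cases hUX : U = univ
  · exact ⟨univ, Filter.univ_mem, isPreconnected_univ, hUX ▸ hUN'.trans hN'N⟩
  exact ⟨_, connectedComponentIn_closure_mem_nhds hU hUX hfr hxU,
    isPreconnected_connectedComponentIn,
    (connectedComponentIn_subset _ _).trans ((closure_minimal hUN' hN'c).trans hN'N)⟩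

theorem exists_isOpen_closure_inter_subset_singleton [T1Space X] [RegularSpace X] {A : Set X}
    (hA : A.Finite) {a : X}
    (h : ∀ N ∈ 𝓝 a, ∃ U, IsOpen U ∧ a ∈ U ∧ U ⊆ N ∧ (frontier U).Finite) :
    ∃ V, IsOpen V ∧ a ∈ V ∧ closure V ∩ A ⊆ {a} ∧ (frontier V).Finite := by
  have hnhds : (A \ {a})ᶜ ∈ 𝓝 a :=
    (hA.sdiff.isClosed.isOpen_compl).mem_nhds fun ha => ha.2 rfl
  obtain ⟨N, hN, hNc, hNA⟩ := exists_mem_nhds_isClosed_subset hnhds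
  obtain ⟨V, hV, haV, hVN, hfr⟩ := h N hN
  refine ⟨V, hV, haV, fun y ⟨hyV, hyA⟩ => ?_, hfr⟩
  by_contra hya
  exact hNA (closure_minimal hVN hNc hyV) ⟨hyA, hya⟩

end FiniteFrontier

section ComponentsOfComplement

variable {X : Type*} [TopologicalSpace X]

theorem closure_connectedComponentIn_inter_subset (F : Set X) (x : X) :
    closure (connectedComponentIn F x) ∩ F ⊆ connectedComponentIn F x := by
  rintro y ⟨hy, hyF⟩
  by_cases hx : x ∈ F
  · have hpre : IsPreconnected (insert y (connectedComponentIn F x)) :=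
      isPreconnected_connectedComponentIn.subset_closure (subset_insert _ _)
        (insert_subset hy subset_closure)
    exact hpre.subset_connectedComponentIn (mem_insert_of_mem _ (mem_connectedComponentIn hx))
      (insert_subset hyF (connectedComponentIn_subset _ _)) (mem_insert y _)
  · simp [connectedComponentIn_eq_empty hx] at hy

variable [LocallyConnectedSpace X]

theorem connectedComponentIn_eq_of_closure_inter_subset {F G : Set X} {x : X} (hF : IsOpen F)
    (hFG : F ⊆ G) (hx : x ∈ F)
    (h : closure (connectedComponentIn F x) ∩ G ⊆ connectedComponentIn F x) :
    connectedComponentIn G x = connectedComponentIn F x :=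
  (isPreconnected_connectedComponentIn.subset_of_closure_inter_subset hF.connectedComponentIn
    ⟨x, mem_connectedComponentIn (hFG hx), mem_connectedComponentIn hx⟩
    ((inter_subset_inter_right _ (connectedComponentIn_subset G x)).trans h)).antisymm
    (connectedComponentIn_mono x hFG)

theorem closure_connectedComponentIn_compl_inter_nonempty [ConnectedSpace X] {A : Set X}
    (hA : IsClosed A) (hAne : A.Nonempty) {x : X} (hx : x ∈ Aᶜ) :
    (closure (connectedComponentIn Aᶜ x) ∩ A).Nonempty := by
  by_contra h
  have hcl : closure (connectedComponentIn Aᶜ x) ⊆ connectedComponentIn Aᶜ x := fun y hy =>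
    closure_connectedComponentIn_inter_subset Aᶜ x ⟨hy, fun hyA => h ⟨y, hy, hyA⟩⟩
  have huniv := IsClopen.eq_univ
    ⟨isClosed_of_closure_subset hcl, hA.isOpen_compl.connectedComponentIn⟩
    ⟨x, mem_connectedComponentIn hx⟩
  obtain ⟨a, ha⟩ := hAne
  exact connectedComponentIn_subset Aᶜ x (huniv ▸ mem_univ a) ha

theorem connectedComponentIn_compl_singleton_eq {A : Set X} (hA : IsClosed A) {a x : X}
    (ha : a ∈ A) (hx : x ∈ Aᶜ) (h : closure (connectedComponentIn Aᶜ x) ∩ A ⊆ {a}) :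
    connectedComponentIn {a}ᶜ x = connectedComponentIn Aᶜ x := by
  refine connectedComponentIn_eq_of_closure_inter_subset hA.isOpen_compl
    (compl_subset_compl.mpr (singleton_subset_iff.mpr ha)) hx ?_
  rintro y ⟨hy, hya⟩
  exact closure_connectedComponentIn_inter_subset Aᶜ x ⟨hy, fun hyA => hya (h ⟨hy, hyA⟩)⟩

theorem finite_connectedComponentIn_compl_of_mem_closure {A V : Set X} (hA : IsClosed A) {a : X}
    (ha : a ∈ A) (hV : IsOpen V) (haV : a ∈ V) (hVA : closure V ∩ A ⊆ {a})
    (hfr : (frontier V).Finite)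
    (hfin : {C : Set X | ∃ x ∈ ({a}ᶜ : Set X), C = connectedComponentIn {a}ᶜ x}.Finite) :
    {C : Set X | (∃ x ∈ Aᶜ, C = connectedComponentIn Aᶜ x) ∧ a ∈ closure C}.Finite := by
  refine (((hfr.inter_of_left Aᶜ).image (connectedComponentIn Aᶜ)).union hfin).subset ?_
  rintro C ⟨⟨x, hx, rfl⟩, haC⟩
  by_cases hmeet : (connectedComponentIn Aᶜ x ∩ frontier V).Nonempty
  · obtain ⟨y, hyC, hyV⟩ := hmeet
    exact Or.inl ⟨y, ⟨hyV, connectedComponentIn_subset _ _ hyC⟩, (connectedComponentIn_eq hyC).symm⟩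
  have hCV : connectedComponentIn Aᶜ x ⊆ V := by
    refine isPreconnected_connectedComponentIn.subset_of_closure_inter_subset hV
      ((mem_closure_iff.mp haC V hV haV).mono fun _ h => h.symm) ?_
    rintro y ⟨hyV, hyC⟩
    by_contra hy
    exact hmeet ⟨y, hyC, hV.frontier_eq ▸ ⟨hyV, hy⟩⟩
  refine Or.inr ⟨x, fun hxa => hx (mem_singleton_iff.mp hxa ▸ ha), ?_⟩
  exact (connectedComponentIn_compl_singleton_eq hA ha hx
    ((inter_subset_inter_left A (closure_mono hCV)).trans hVA)).symm

end ComponentsOfComplement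

theorem stmt17_general {X : Type*} [MetricSpace X] [CompactSpace X] [ConnectedSpace X]
    (hreg : ∀ x : X, ∀ ε > (0 : ℝ), ∃ U : Set X,
      IsOpen U ∧ x ∈ U ∧ U ⊆ Metric.ball x ε ∧ (frontier U).Finite)
    (A : Set X) (hA : A.Finite)
    (hfinord : ∀ a ∈ A,
      {C : Set X | ∃ x ∈ ({a}ᶜ : Set X), C = connectedComponentIn {a}ᶜ x}.Finite) :
    {C : Set X | ∃ x ∈ Aᶜ, C = connectedComponentIn Aᶜ x}.Finite := by
  have hbasis : ∀ x : X, ∀ N ∈ 𝓝 x, ∃ U, IsOpen U ∧ x ∈ U ∧ U ⊆ N ∧ (frontier U).Finite := by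
    intro x N hN
    obtain ⟨ε, hε, hball⟩ := Metric.mem_nhds_iff.mp hN
    obtain ⟨U, hU, hxU, hUε, hfr⟩ := hreg x ε hε
    exact ⟨U, hU, hxU, hUε.trans hball, hfr⟩
  have := locallyConnectedSpace_of_finite_frontier hbasis
  rcases A.eq_empty_or_nonempty with rfl | hAne
  · refine (finite_singleton univ).subset ?_
    rintro C ⟨x, -, rfl⟩
    simp [connectedComponentIn_univ, PreconnectedSpace.connectedComponent_eq_univ]
  have hattached : {C : Set X | ∃ x ∈ Aᶜ, C = connectedComponentIn Aᶜ x} ⊆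
      ⋃ a ∈ A, {C | (∃ x ∈ Aᶜ, C = connectedComponentIn Aᶜ x) ∧ a ∈ closure C} := by
    rintro C ⟨x, hx, rfl⟩
    obtain ⟨a, haC, ha⟩ := closure_connectedComponentIn_compl_inter_nonempty hA.isClosed hAne hx
    exact mem_biUnion ha ⟨⟨x, hx, rfl⟩, haC⟩
  refine (hA.biUnion fun a ha => ?_).subset hattached
  obtain ⟨V, hV, haV, hVA, hfr⟩ := exists_isOpen_closure_inter_subset_singleton hA (hbasis a)
  exact finite_connectedComponentIn_compl_of_mem_closure hA.isClosed ha hV haV hVA hfr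
    (hfinord a ha)

/-- in a regular curve, removing a finite set of separating
points of finite order leaves only finitely many connected components. -/
theorem stmt17 {X : Type*} [MetricSpace X] [CompactSpace X] [ConnectedSpace X]
    [Nonempty X]
    (hreg : ∀ x : X, ∀ ε > (0 : ℝ), ∃ U : Set X,
      IsOpen U ∧ x ∈ U ∧ U ⊆ Metric.ball x ε ∧ (frontier U).Finite)
    (A : Set X) (hA : A.Finite)
    (hfinord : ∀ a ∈ A,
      {C : Set X | ∃ x ∈ ({a}ᶜ : Set X), C = connectedComponentIn {a}ᶜ x}.Finite) :
    {C : Set X | ∃ x ∈ Aᶜ, C = connectedComponentIn Aᶜ x}.Finite :=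
  stmt17_general hreg A hA hfinord
end

section
/- Let G be a group acting on a topological space X with generators h_1, h_2, and suppose there exist pairwise disjoint nonempty open sets U_1, U_2, V_1, V_2, W with h_1(U_1 ∪ U_2 ∪ V_2 ∪ W) ⊆ U_1, h_1^{-1}(U_2 ∪ V_1 ∪ V_2 ∪ W) ⊆ V_1, h_2(U_1 ∪ U_2 ∪ V_1 ∪ W) ⊆ U_2, h_2^{-1}(U_1 ∪ V_1 ∪ V_2 ∪ W) ⊆ V_2. Then the subgroup generated by h_1 and h_2 is a free group of rank 2; in particular, for every nonidentity element h of this subgroup, h(W) ∩ W = ∅. -/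
lemma reduce_chain'_aux {α : Type*} [DecidableEq α] (L : List (α × Bool)) :
    (FreeGroup.reduce L).Chain' (fun p q => ¬(p.1 = q.1 ∧ p.2 = !q.2)) := by
  induction L with
  | nil => exact List.isChain_nil
  | cons x L ih =>
    rw [FreeGroup.reduce.cons]
    rcases h : FreeGroup.reduce L with _ | ⟨hd, tl⟩
    · exact List.isChain_singleton _
    · rw [h] at ih
      dsimp only
      split_ifs with hc
      · exact ih.tail
      · exact List.isChain_cons_cons.2 ⟨hc, ih⟩

/-- ping-pong / quasi-Schottky configuration: the group
generated by `h₁, h₂` is free of rank 2, and every nonidentity element moves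
`W` off itself. -/
theorem stmt18 {X : Type*} [TopologicalSpace X] (h₁ h₂ : X ≃ₜ X)
    (U₁ U₂ V₁ V₂ W : Set X)
    (hne : U₁.Nonempty ∧ U₂.Nonempty ∧ V₁.Nonempty ∧ V₂.Nonempty ∧ W.Nonempty)
    (hopen : IsOpen U₁ ∧ IsOpen U₂ ∧ IsOpen V₁ ∧ IsOpen V₂ ∧ IsOpen W)
    (hdisj : ([U₁, U₂, V₁, V₂, W] : List (Set X)).Pairwise Disjoint)
    (h1a : h₁ '' (U₁ ∪ U₂ ∪ V₂ ∪ W) ⊆ U₁)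
    (h1b : h₁.symm '' (U₂ ∪ V₁ ∪ V₂ ∪ W) ⊆ V₁)
    (h2a : h₂ '' (U₁ ∪ U₂ ∪ V₁ ∪ W) ⊆ U₂)
    (h2b : h₂.symm '' (U₁ ∪ V₁ ∪ V₂ ∪ W) ⊆ V₂) :
    Function.Injective
      (FreeGroup.lift (fun b : Bool => if b then h₁.toEquiv else h₂.toEquiv) :
        FreeGroup Bool →* Equiv.Perm X) ∧
    ∀ h : Equiv.Perm X, h ∈ Subgroup.closure {h₁.toEquiv, h₂.toEquiv} →
      h ≠ 1 → (h '' W) ∩ W = ∅ := by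
  set a : Bool → Equiv.Perm X := fun b => if b then h₁.toEquiv else h₂.toEquiv with ha
  set gen : Bool × Bool → Equiv.Perm X := fun x => cond x.2 (a x.1) (a x.1)⁻¹ with hgen
  set T : Bool × Bool → Set X := fun p =>
    match p with
    | (true, true) => U₁
    | (false, true) => U₂
    | (true, false) => V₁
    | (false, false) => V₂ with hT
  set R : Bool × Bool → Bool × Bool → Prop := fun p q => ¬(p.1 = q.1 ∧ p.2 = !q.2) with hR
  simp only [List.pairwise_cons, List.mem_cons, List.not_mem_nil,
    List.Pairwise.nil, or_false] at hdisj
  obtain ⟨d1, d2, d3, d4, -⟩ := hdisj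
  have dWT : ∀ p, Disjoint (T p) W := by
    rintro ⟨x | x, b | b⟩
    · exact d4 W rfl
    · exact d2 W (Or.inr (Or.inr rfl))
    · exact d3 W (Or.inr rfl)
    · exact d1 W (Or.inr (Or.inr (Or.inr rfl)))
  have hA : ∀ p : Bool × Bool, (gen p : X → X) '' W ⊆ T p := by
    rintro ⟨x | x, b | b⟩
    · exact fun y ⟨w, hw, hyw⟩ => h2b ⟨w, Or.inr hw, hyw⟩
    · exact fun y ⟨w, hw, hyw⟩ => h2a ⟨w, Or.inr hw, hyw⟩
    · exact fun y ⟨w, hw, hyw⟩ => h1b ⟨w, Or.inr hw, hyw⟩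
    · exact fun y ⟨w, hw, hyw⟩ => h1a ⟨w, Or.inr hw, hyw⟩
  have hB : ∀ p q : Bool × Bool, R p q → (gen p : X → X) '' T q ⊆ T p := by
    rintro ⟨x | x, b | b⟩ ⟨x' | x', b' | b'⟩ hpq
    -- p = (false, false) : h₂⁻¹, target V₂, via h2b (U₁ ∪ V₁ ∪ V₂ ∪ W)
    · exact fun y ⟨w, hw, hyw⟩ => h2b ⟨w, Or.inl (Or.inr hw), hyw⟩           -- q=(ff): V₂
    · exact absurd ⟨rfl, rfl⟩ hpq                                            -- q=(ft): excluded
    · exact fun y ⟨w, hw, hyw⟩ => h2b ⟨w, Or.inl (Or.inl (Or.inr hw)), hyw⟩  -- q=(tf): V₁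
    · exact fun y ⟨w, hw, hyw⟩ => h2b ⟨w, Or.inl (Or.inl (Or.inl hw)), hyw⟩  -- q=(tt): U₁
    -- p = (false, true) : h₂, target U₂, via h2a (U₁ ∪ U₂ ∪ V₁ ∪ W)
    · exact absurd ⟨rfl, rfl⟩ hpq                                            -- q=(ff): excluded
    · exact fun y ⟨w, hw, hyw⟩ => h2a ⟨w, Or.inl (Or.inl (Or.inr hw)), hyw⟩  -- q=(ft): U₂
    · exact fun y ⟨w, hw, hyw⟩ => h2a ⟨w, Or.inl (Or.inr hw), hyw⟩           -- q=(tf): V₁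
    · exact fun y ⟨w, hw, hyw⟩ => h2a ⟨w, Or.inl (Or.inl (Or.inl hw)), hyw⟩  -- q=(tt): U₁
    -- p = (true, false) : h₁⁻¹, target V₁, via h1b (U₂ ∪ V₁ ∪ V₂ ∪ W)
    · exact fun y ⟨w, hw, hyw⟩ => h1b ⟨w, Or.inl (Or.inr hw), hyw⟩           -- q=(ff): V₂
    · exact fun y ⟨w, hw, hyw⟩ => h1b ⟨w, Or.inl (Or.inl (Or.inl hw)), hyw⟩  -- q=(ft): U₂
    · exact fun y ⟨w, hw, hyw⟩ => h1b ⟨w, Or.inl (Or.inl (Or.inr hw)), hyw⟩  -- q=(tf): V₁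
    · exact absurd ⟨rfl, rfl⟩ hpq                                            -- q=(tt): excluded
    -- p = (true, true) : h₁, target U₁, via h1a (U₁ ∪ U₂ ∪ V₂ ∪ W)
    · exact fun y ⟨w, hw, hyw⟩ => h1a ⟨w, Or.inl (Or.inr hw), hyw⟩           -- q=(ff): V₂
    · exact fun y ⟨w, hw, hyw⟩ => h1a ⟨w, Or.inl (Or.inl (Or.inr hw)), hyw⟩  -- q=(ft): U₂
    · exact absurd ⟨rfl, rfl⟩ hpq                                            -- q=(tf): excluded
    · exact fun y ⟨w, hw, hyw⟩ => h1a ⟨w, Or.inl (Or.inl (Or.inl hw)), hyw⟩  -- q=(tt): U₁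
  have key : ∀ (L : List (Bool × Bool)) (q : Bool × Bool), List.Chain' R (q :: L) →
      (FreeGroup.lift a (FreeGroup.mk (q :: L)) : X → X) '' W ⊆ T q := by
    intro L
    induction L with
    | nil =>
      intro q _
      have : FreeGroup.lift a (FreeGroup.mk [q]) = gen q := by
        rw [FreeGroup.lift_mk]; simp [hgen]
      rw [this]; exact hA q
    | cons r L ih =>
      intro q hch
      obtain ⟨hqr, hch'⟩ := List.isChain_cons_cons.mp hch
      have : FreeGroup.lift a (FreeGroup.mk (q :: r :: L)) =
          gen q * FreeGroup.lift a (FreeGroup.mk (r :: L)) := by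
        rw [FreeGroup.lift_mk, FreeGroup.lift_mk, List.map_cons, List.prod_cons]
      rw [this, Equiv.Perm.coe_mul, Set.image_comp]
      exact (Set.image_mono (ih r hch')).trans (hB q r hqr)
  have main : ∀ w : FreeGroup Bool, w ≠ 1 →
      ∃ q, (FreeGroup.lift a w : X → X) '' W ⊆ T q := by
    intro w hw0
    have htw : w.toWord ≠ [] := fun h => hw0 (FreeGroup.toWord_eq_nil_iff.mp h)
    obtain ⟨q, L, hqL⟩ := List.exists_cons_of_ne_nil htw
    have hch : List.Chain' R (q :: L) := by
      have := reduce_chain'_aux (w.toWord)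
      rw [FreeGroup.reduce_toWord, hqL] at this
      exact this
    have hsub := key L q hch
    rw [← hqL, FreeGroup.mk_toWord] at hsub
    exact ⟨q, hsub⟩
  constructor
  · rw [injective_iff_map_eq_one]
    intro w hw
    by_contra hw0
    obtain ⟨q, hsub⟩ := main w hw0
    rw [hw] at hsub
    simp only [Equiv.Perm.coe_one, Set.image_id] at hsub
    obtain ⟨x, hx⟩ := hne.2.2.2.2
    exact Set.disjoint_left.mp (dWT q) (hsub hx) hx
  · intro h hmem hne1
    have hra : Set.range a = {h₁.toEquiv, h₂.toEquiv} := by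
      ext g
      simp only [Set.mem_range, Set.mem_insert_iff, Set.mem_singleton_iff]
      constructor
      · rintro ⟨b, rfl⟩; cases b <;> simp [ha]
      · rintro (rfl | rfl)
        exacts [⟨true, by simp [ha]⟩, ⟨false, by simp [ha]⟩]
    have : h ∈ (FreeGroup.lift a).range := by
      rw [FreeGroup.range_lift_eq_closure, hra]; exact hmem
    obtain ⟨w, rfl⟩ := this
    have hw0 : w ≠ 1 := fun h0 => hne1 (by rw [h0, map_one])
    obtain ⟨q, hsub⟩ := main w hw0
    rw [Set.eq_empty_iff_forall_notMem]
    rintro y ⟨hy1, hy2⟩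
    exact Set.disjoint_left.mp (dWT q) (hsub hy1) hy2
end
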